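/- arXiv:1911.09931 — 10 statements merged into one kernel-verified Lean document; each statement's English description precedes it below -/
import Mathlib

section
/- Let (C^•, ∂) be a finite-dimensional acyclic cochain complex and let a : C^• → C^{•+1} be a degree +1 linear map satisfying the anticommutation relation ∂∘a + a∘∂ = 0. If k and k′ are two cochain contractions (i.e. ∂k + k∂ = id and ∂k′ + k′∂ = id), then str(a∘k) = str(a∘k′), where str denotes the super trace on the graded space C^•. -/
/-!
Put `h := a ∘ k ∘ k'`, a map of degree `-1` (zero on `C^1`, where `k` would land in `C^{-1}`).
Then `∂h + h∂ = a k - a k'`: use `∂a = -a∂`, then `k∂ = 1 - ∂k`, then `∂k' + k'∂ = 1`.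
Since `tr(∂ ∘ h) = tr(h ∘ ∂)` across adjacent degrees, the super trace of `∂h + h∂`
telescopes to its two boundary terms, and both vanish because `C^{n+1} = 0`.
-/

open Finset LinearMap

theorem sum_range_neg_one_pow_mul_add_succ {R : Type*} [CommRing R] (t : ℕ → R) (n : ℕ) :
    ∑ j ∈ range n, (-1 : R) ^ (j + 1) * (t j + t (j + 1)) = (-1) ^ n * t n - t 0 := by
  have hsub := sum_range_sub (fun j => (-1 : R) ^ j * t j) n
  rw [pow_zero, one_mul] at hsub
  rw [← hsub]
  refine sum_congr rfl fun j _ => ?_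
  ring

section GradedModule

variable {K : Type*} [CommRing K] {C : ℕ → Type*} [∀ j, AddCommGroup (C j)]
  [∀ j, Module K (C j)]

theorem sum_supertrace_comp_add_comp [∀ j, Module.Free K (C j)] [∀ j, Module.Finite K (C j)]
    (d : ∀ j, C j →ₗ[K] C (j + 1)) (h : ∀ j, C (j + 1) →ₗ[K] C j) (n : ℕ) :
    ∑ j ∈ range n, (-1 : K) ^ (j + 1) *
        trace K (C (j + 1)) (d j ∘ₗ h j + h (j + 1) ∘ₗ d (j + 1)) =
      (-1) ^ n * trace K (C n) (h n ∘ₗ d n) - trace K (C 0) (h 0 ∘ₗ d 0) := by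
  simp_rw [map_add, trace_comp_comm' (h _) (d _)]
  exact sum_range_neg_one_pow_mul_add_succ (fun j => trace K (C j) (h j ∘ₗ d j)) n

def contractionHomotopy (a : ∀ j, C j →ₗ[K] C (j + 1)) (k k' : ∀ j, C (j + 1) →ₗ[K] C j) :
    ∀ j, C (j + 1) →ₗ[K] C j
  | 0 => 0
  | j + 1 => a j ∘ₗ k j ∘ₗ k' (j + 1)

theorem comp_sub_comp_eq_contractionHomotopy (d a : ∀ j, C j →ₗ[K] C (j + 1))
    (hanti : ∀ j, d (j + 1) ∘ₗ a j + a (j + 1) ∘ₗ d j = 0)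
    (k k' : ∀ j, C (j + 1) →ₗ[K] C j) (hk0 : k 0 ∘ₗ d 0 = LinearMap.id)
    (hk : ∀ j, d j ∘ₗ k j + k (j + 1) ∘ₗ d (j + 1) = LinearMap.id)
    (hk' : ∀ j, d j ∘ₗ k' j + k' (j + 1) ∘ₗ d (j + 1) = LinearMap.id) (j : ℕ) :
    a j ∘ₗ k j - a j ∘ₗ k' j =
      d j ∘ₗ contractionHomotopy a k k' j
        + contractionHomotopy a k k' (j + 1) ∘ₗ d (j + 1) := by
  ext x
  have hx : d j (k' j x) + k' (j + 1) (d (j + 1) x) = x := congr($(hk' j) x)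
  rw [LinearMap.sub_apply, comp_apply]
  nth_rw 1 [← hx]
  cases j with
  | zero =>
    have hkd : k 0 (d 0 (k' 0 x)) = k' 0 x := congr($hk0 (k' 0 x))
    simp [contractionHomotopy, hkd]
  | succ j =>
    have hkd : ∀ y, k (j + 1) (d (j + 1) y) = y - d j (k j y) := fun y => by
      rw [eq_sub_iff_add_eq']; exact congr($(hk j) y)
    have had : ∀ z, a (j + 1) (d j z) = -d (j + 1) (a j z) := fun z =>
      eq_neg_of_add_eq_zero_right (by simpa using congr($(hanti j) z))
    simp only [map_add, hkd, map_sub, had, sub_neg_eq_add, coe_comp, Function.comp_apply,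
      contractionHomotopy, LinearMap.add_apply]
    abel

end GradedModule

theorem stmt3_general (K : Type*) [Field K] (n : ℕ) (C : ℕ → Type*)
    [∀ j, AddCommGroup (C j)] [∀ j, Module K (C j)]
    [∀ j, FiniteDimensional K (C j)]
    (htop : ∀ j, n < j → ∀ x : C j, x = 0)
    (d : ∀ j, C j →ₗ[K] C (j + 1))
    (a : ∀ j, C j →ₗ[K] C (j + 1))
    (hanti : ∀ j, (d (j + 1)) ∘ₗ (a j) + (a (j + 1)) ∘ₗ (d j) = 0)
    (k k' : ∀ j, C (j + 1) →ₗ[K] C j)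
    (hk0 : (k 0) ∘ₗ (d 0) = LinearMap.id)
    (hk : ∀ j, (d j) ∘ₗ (k j) + (k (j + 1)) ∘ₗ (d (j + 1)) = LinearMap.id)
    (hk' : ∀ j, (d j) ∘ₗ (k' j) + (k' (j + 1)) ∘ₗ (d (j + 1)) = LinearMap.id) :
    ∑ j ∈ Finset.range n,
        (-1 : K) ^ (j + 1) * LinearMap.trace K (C (j + 1)) ((a j) ∘ₗ (k j)) =
      ∑ j ∈ Finset.range n,
        (-1 : K) ^ (j + 1) * LinearMap.trace K (C (j + 1)) ((a j) ∘ₗ (k' j)) := by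
  have hdn : d n = 0 := LinearMap.ext fun x => htop (n + 1) n.lt_succ_self _
  rw [← sub_eq_zero, ← sum_sub_distrib]
  simp_rw [← mul_sub, ← map_sub,
    comp_sub_comp_eq_contractionHomotopy d a hanti k k' hk0 hk hk']
  rw [sum_supertrace_comp_add_comp, hdn]
  simp [contractionHomotopy]

theorem stmt3 (K : Type*) [Field K] [CharZero K] (n : ℕ) (C : ℕ → Type*)
    [∀ j, AddCommGroup (C j)] [∀ j, Module K (C j)]
    [∀ j, FiniteDimensional K (C j)]
    (htop : ∀ j, n < j → ∀ x : C j, x = 0)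
    (d : ∀ j, C j →ₗ[K] C (j + 1))
    (hdd : ∀ j, (d (j + 1)) ∘ₗ (d j) = 0)
    (h0 : LinearMap.ker (d 0) = ⊥)
    (hexact : ∀ j, LinearMap.ker (d (j + 1)) = LinearMap.range (d j))
    (a : ∀ j, C j →ₗ[K] C (j + 1))
    (hanti : ∀ j, (d (j + 1)) ∘ₗ (a j) + (a (j + 1)) ∘ₗ (d j) = 0)
    (k k' : ∀ j, C (j + 1) →ₗ[K] C j)
    (hk0 : (k 0) ∘ₗ (d 0) = LinearMap.id)
    (hk : ∀ j, (d j) ∘ₗ (k j) + (k (j + 1)) ∘ₗ (d (j + 1)) = LinearMap.id)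
    (hk'0 : (k' 0) ∘ₗ (d 0) = LinearMap.id)
    (hk' : ∀ j, (d j) ∘ₗ (k' j) + (k' (j + 1)) ∘ₗ (d (j + 1)) = LinearMap.id) :
    ∑ j ∈ Finset.range n,
        (-1 : K) ^ (j + 1) * LinearMap.trace K (C (j + 1)) ((a j) ∘ₗ (k j)) =
      ∑ j ∈ Finset.range n,
        (-1 : K) ^ (j + 1) * LinearMap.trace K (C (j + 1)) ((a j) ∘ₗ (k' j)) :=
  stmt3_general K n C htop d a hanti k k' hk0 hk hk'
end

section
/- Let W be a real (or complex) vector space of dimension n−1 and P : W → W a linear map. Let A : ℝ ⊕ W → ℝ ⊕ W (resp. with ℂ) be the linear map A = id_ℝ ⊕ P. Then Σ_{k=0}^n (−1)^k k · tr(Λ^k A) = −det(id_W − P), where Λ^k A denotes the induced map on the k-th exterior power of ℝ ⊕ W. -/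
set_option maxHeartbeats 1000000
set_option synthInstance.maxHeartbeats 1000000

/-- The endomorphism `Λ^k f` of the `k`-th exterior power induced by an
endomorphism `f` of `M`. -/
noncomputable def extPowMap (K : Type*) [Field K] {M : Type*} [AddCommGroup M]
    [Module K M] (k : ℕ) (f : M →ₗ[K] M) : ⋀[K]^k M →ₗ[K] ⋀[K]^k M :=
  LinearMap.restrict (ExteriorAlgebra.map f).toLinearMap
    (p := ⋀[K]^k M) (q := ⋀[K]^k M) (by
      intro x hx
      rw [← ExteriorAlgebra.ιMulti_span_fixedDegree] at hx ⊢
      have h : Submodule.map (ExteriorAlgebra.map f).toLinearMap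
          (Submodule.span K (Set.range (ExteriorAlgebra.ιMulti K k (M := M)))) ≤
          Submodule.span K (Set.range (ExteriorAlgebra.ιMulti K k (M := M))) := by
        rw [Submodule.map_span_le]
        rintro m ⟨v, rfl⟩
        exact Submodule.subset_span
          ⟨f ∘ v, (ExteriorAlgebra.map_apply_ιMulti f v).symm⟩
      exact h (Submodule.mem_map_of_mem hx))

namespace Stmt5Aux

open ExteriorAlgebra Finset Module

variable {K : Type*} [Field K] {M : Type*} [AddCommGroup M] [Module K M]

/-- The principal minor of a matrix at a finite set of indices. -/
noncomputable def minor {I : Type*} [DecidableEq I] (A : Matrix I I K) (s : Finset I) : K :=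
  (A.submatrix (fun i : ↥s => (i : I)) (fun i : ↥s => (i : I))).det

variable {I : Type*} [Fintype I] [LinearOrder I]

/-- The alternating map sending `v` to `det (b.coord (σ j) (v i))`. -/
noncomputable def coordAlt (b : Basis I K M) (k : ℕ) (σ : Fin k → I) : M [⋀^Fin k]→ₗ[K] K :=
  (Matrix.detRowAlternating (R := K) (n := Fin k)).compLinearMap
    (LinearMap.pi fun j => b.coord (σ j))

lemma coordAlt_apply (b : Basis I K M) (k : ℕ) (σ : Fin k → I) (v : Fin k → M) :
    coordAlt b k σ v = Matrix.det (Matrix.of fun i j => b.coord (σ j) (v i)) := rfl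

/-- The linear functional on the exterior algebra extracting the coefficient of a
basis monomial in degree `k`. -/
noncomputable def dualF (b : Basis I K M) (k : ℕ) (σ : Fin k → I) :
    ExteriorAlgebra K M →ₗ[K] K :=
  liftAlternating (Function.update (fun i => (0 : M [⋀^Fin i]→ₗ[K] K)) k (coordAlt b k σ))

lemma dualF_ιMulti (b : Basis I K M) (k : ℕ) (σ : Fin k → I) (v : Fin k → M) :
    dualF b k σ (ιMulti K k v) = coordAlt b k σ v := by
  rw [dualF, liftAlternating_apply_ιMulti, Function.update_self]

/-- The family of exterior monomials indexed by size-`k` subsets. -/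
noncomputable def gFam (b : Basis I K M) (k : ℕ) (s : {u : Finset I // u.card = k}) :
    ExteriorAlgebra K M :=
  ιMulti K k fun i => b (s.1.orderIsoOfFin s.2 i)

lemma dualF_gFam (b : Basis I K M) (k : ℕ) (s t : {u : Finset I // u.card = k}) :
    dualF b k (fun i => s.1.orderIsoOfFin s.2 i) (gFam b k t) = if s = t then 1 else 0 := by
  rw [gFam, dualF_ιMulti, coordAlt_apply]
  have hentry : ∀ i j, (b.coord ((s.1.orderIsoOfFin s.2 j : I)))
      (b ((t.1.orderIsoOfFin t.2 i : I)))
      = if (s.1.orderIsoOfFin s.2 j : I) = (t.1.orderIsoOfFin t.2 i : I) then 1 else 0 := by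
    intro i j
    rw [Basis.coord_apply, Basis.repr_self, Finsupp.single_apply]
    exact if_congr eq_comm rfl rfl
  by_cases hst : s = t
  · subst hst
    simp only [if_pos rfl]
    have : (Matrix.of fun i j => (b.coord ((s.1.orderIsoOfFin s.2 j : I)))
        (b ((s.1.orderIsoOfFin s.2 i : I)))) = (1 : Matrix (Fin k) (Fin k) K) := by
      ext i j
      rw [Matrix.of_apply, hentry, Matrix.one_apply]
      simp only [Subtype.coe_inj, (s.1.orderIsoOfFin s.2).injective.eq_iff]
      exact if_congr eq_comm rfl rfl
    rw [this, Matrix.det_one]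
    simp
  · rw [if_neg hst]
    -- find an element of `s` not in `t`
    have hns : ¬ s.1 ⊆ t.1 := by
      intro hsub
      exact hst (Subtype.ext (Finset.eq_of_subset_of_card_le hsub (by rw [s.2, t.2])))
    obtain ⟨x, hxs, hxt⟩ := Finset.not_subset.1 hns
    obtain ⟨j0, hj0⟩ := (s.1.orderIsoOfFin s.2).surjective ⟨x, hxs⟩
    apply Matrix.det_eq_zero_of_column_eq_zero j0
    intro i
    rw [Matrix.of_apply, hentry, if_neg]
    intro h
    apply hxt
    have hmem : ((t.1.orderIsoOfFin t.2 i : I)) ∈ t.1 := (t.1.orderIsoOfFin t.2 i).2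
    rw [← h, hj0] at hmem
    exact hmem

lemma gFam_li (b : Basis I K M) (k : ℕ) : LinearIndependent K (gFam b k) := by
  rw [Fintype.linearIndependent_iff]
  intro c hc s
  have := congrArg (dualF b k (fun i => s.1.orderIsoOfFin s.2 i)) hc
  rw [map_sum, map_zero] at this
  simp only [map_smul, dualF_gFam, smul_eq_mul, mul_ite, mul_one, mul_zero] at this
  rwa [Finset.sum_ite_eq (Finset.univ) s c, if_pos (Finset.mem_univ s)] at this

lemma gFam_span (b : Basis I K M) (k : ℕ) :
    Submodule.span K (Set.range (gFam b k)) = ⋀[K]^k M := by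
  apply le_antisymm
  · rw [Submodule.span_le]
    rintro _ ⟨s, rfl⟩
    exact ιMulti_range K k ⟨_, rfl⟩
  · rw [← ιMulti_span_fixedDegree, Submodule.span_le]
    rintro _ ⟨v, rfl⟩
    have hv : v = fun i => ∑ j, b.repr (v i) j • b j := by
      funext i; exact (b.sum_repr (v i)).symm
    rw [hv]
    rw [show (ιMulti K k (fun i => ∑ j, b.repr (v i) j • b j) : ExteriorAlgebra K M)
        = (ιMulti K k).toMultilinearMap (fun i => ∑ j, b.repr (v i) j • b j) from rfl]
    rw [MultilinearMap.map_sum]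
    apply Submodule.sum_mem
    intro r _
    rw [MultilinearMap.map_smul_univ]
    apply Submodule.smul_mem
    by_cases hr : Function.Injective r
    · -- the image subset
      have hs : (Finset.image r Finset.univ).card = k := by
        rw [Finset.card_image_of_injective _ hr, Finset.card_univ, Fintype.card_fin]
      set s : {u : Finset I // u.card = k} := ⟨Finset.image r Finset.univ, hs⟩ with hsdef
      have hmem : ∀ i, r i ∈ s.1 := fun i => Finset.mem_image_of_mem _ (Finset.mem_univ i)
      set r' : Fin k → ↥s.1 := fun i => ⟨r i, hmem i⟩ with hr'def
      have hr'inj : Function.Injective r' := fun a b hab => hr (congrArg Subtype.val hab)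
      have hr'bij : Function.Bijective r' := (Fintype.bijective_iff_injective_and_card r').mpr
        ⟨hr'inj, by rw [Fintype.card_fin, Fintype.card_coe, s.2]⟩
      set e : Fin k ≃ Fin k :=
        (Equiv.ofBijective r' hr'bij).trans (s.1.orderIsoOfFin s.2).toEquiv.symm with hedef
      have hcomp : (fun i => b (r i)) = (fun i => b ((s.1.orderIsoOfFin s.2 i : I))) ∘ e := by
        funext i
        simp only [Function.comp_apply, hedef, Equiv.trans_apply]
        congr 1
        have : s.1.orderIsoOfFin s.2 ((s.1.orderIsoOfFin s.2).toEquiv.symm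
            (Equiv.ofBijective r' hr'bij i)) = Equiv.ofBijective r' hr'bij i := by
          exact (s.1.orderIsoOfFin s.2).apply_symm_apply _
        rw [this]
        rfl
      rw [show ((ιMulti K k).toMultilinearMap fun i => b (r i))
          = ιMulti K k fun i => b (r i) from rfl, hcomp]
      rw [AlternatingMap.map_perm]
      apply Submodule.smul_mem
      exact Submodule.subset_span ⟨s, rfl⟩
    · have : ¬ Function.Injective fun i => b (r i) := by
        intro h
        exact hr fun a c hac => h (by simp [hac])
      rw [show ((ιMulti K k).toMultilinearMap fun i => b (r i))
          = ιMulti K k fun i => b (r i) from rfl]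
      rw [AlternatingMap.map_eq_zero_of_not_injective _ _ this]
      exact Submodule.zero_mem _

/-- Basis of the `k`-th exterior power indexed by size-`k` subsets. -/
noncomputable def extBasis (b : Basis I K M) (k : ℕ) :
    Basis {u : Finset I // u.card = k} K (⋀[K]^k M) :=
  (Basis.span (gFam_li b k)).map (LinearEquiv.ofEq _ _ (gFam_span b k))

lemma extBasis_coe (b : Basis I K M) (k : ℕ) (s : {u : Finset I // u.card = k}) :
    ((extBasis b k s : ⋀[K]^k M) : ExteriorAlgebra K M) = gFam b k s := by
  rw [extBasis, Basis.map_apply]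
  rw [show ((LinearEquiv.ofEq _ _ (gFam_span b k)) (Basis.span (gFam_li b k) s)
      : ExteriorAlgebra K M) = ((Basis.span (gFam_li b k) s : ExteriorAlgebra K M)) from rfl]
  exact congrArg Subtype.val (Basis.span_apply (gFam_li b k) s)

lemma extBasis_repr (b : Basis I K M) (k : ℕ) (x : ⋀[K]^k M)
    (s : {u : Finset I // u.card = k}) :
    (extBasis b k).repr x s
      = dualF b k (fun i => s.1.orderIsoOfFin s.2 i) (x : ExteriorAlgebra K M) := by
  have : (extBasis b k).coord s
      = (dualF b k (fun i => s.1.orderIsoOfFin s.2 i)).comp (⋀[K]^k M).subtype := by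
    apply Basis.ext (extBasis b k)
    intro t
    rw [Basis.coord_apply, Basis.repr_self, LinearMap.comp_apply, Submodule.subtype_apply,
      extBasis_coe, dualF_gFam, Finsupp.single_apply]
    exact if_congr eq_comm rfl rfl
  have h2 := congrArg (fun f => f x) this
  simpa [Basis.coord_apply] using h2


lemma extPowMap_val (k : ℕ) (f : M →ₗ[K] M) (x : ⋀[K]^k M) :
    ((extPowMap K k f x : ⋀[K]^k M) : ExteriorAlgebra K M)
      = ExteriorAlgebra.map f (x : ExteriorAlgebra K M) := rfl

theorem trace_extPow [DecidableEq I] (b : Basis I K M) (f : M →ₗ[K] M) (k : ℕ) :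
    LinearMap.trace K (⋀[K]^k M) (extPowMap K k f)
      = ∑ s ∈ Finset.univ.powersetCard k, minor (LinearMap.toMatrix b b f) s := by
  classical
  rw [LinearMap.trace_eq_matrix_trace K (extBasis b k), Matrix.trace]
  rw [Finset.sum_subtype (Finset.univ.powersetCard k)
    (p := fun u : Finset I => u.card = k)
    (fun u => by simp [Finset.mem_powersetCard]) (fun u => minor (LinearMap.toMatrix b b f) u)]
  apply Finset.sum_congr rfl
  intro s _
  rw [Matrix.diag_apply, LinearMap.toMatrix_apply, extBasis_repr, extPowMap_val, extBasis_coe,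
    gFam]
  rw [show (ExteriorAlgebra.map f) (ιMulti K k fun i => b ((s.1.orderIsoOfFin s.2) i))
      = ιMulti K k (f ∘ fun i => b ((s.1.orderIsoOfFin s.2) i)) from map_apply_ιMulti f _]
  rw [dualF_ιMulti, coordAlt_apply]
  have hM : (Matrix.of fun i j => (b.coord ((s.1.orderIsoOfFin s.2 j : I)))
        ((f ∘ fun i => b ((s.1.orderIsoOfFin s.2) i)) i))
      = ((LinearMap.toMatrix b b f).submatrix
          (fun i : ↥s.1 => (i : I)) (fun i : ↥s.1 => (i : I))).transpose.submatrix
          (s.1.orderIsoOfFin s.2).toEquiv (s.1.orderIsoOfFin s.2).toEquiv := by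
    ext i j
    simp only [Matrix.of_apply, Function.comp_apply, Matrix.submatrix_apply,
      Matrix.transpose_apply, LinearMap.toMatrix_apply, Basis.coord_apply]
    rfl
  rw [hM, Matrix.det_submatrix_equiv_self, Matrix.det_transpose]
  rfl


section Det

variable {J : Type*} [Fintype J] [DecidableEq J]

lemma det_piecewise (A : Matrix J J K) (s : Finset J) :
    Matrix.det (Matrix.of (s.piecewise (A : J → J → K) (1 : Matrix J J K))) = minor A s := by
  classical
  rw [← Matrix.det_submatrix_equiv_self (Equiv.sumCompl (· ∈ s))]
  have : (Matrix.of (s.piecewise (A : J → J → K) (1 : Matrix J J K))).submatrix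
      (Equiv.sumCompl (· ∈ s)) (Equiv.sumCompl (· ∈ s))
      = Matrix.fromBlocks
          (A.submatrix (fun i : ↥s => (i : J)) (fun i : ↥s => (i : J)))
          (A.submatrix (fun i : ↥s => (i : J)) (fun i : {x // x ∉ s} => (i : J)))
          0 1 := by
    ext i j
    cases i with
    | inl i =>
      cases j with
      | inl j =>
        simp only [Matrix.submatrix_apply, Equiv.sumCompl_apply_inl, Matrix.of_apply,
          Matrix.fromBlocks_apply₁₁]
        exact congrFun (Finset.piecewise_eq_of_mem s (A : J → J → K) (1 : Matrix J J K) i.2) _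
      | inr j =>
        simp only [Matrix.submatrix_apply, Equiv.sumCompl_apply_inl, Equiv.sumCompl_apply_inr,
          Matrix.of_apply, Matrix.fromBlocks_apply₁₂]
        exact congrFun (Finset.piecewise_eq_of_mem s (A : J → J → K) (1 : Matrix J J K) i.2) _
    | inr i =>
      cases j with
      | inl j =>
        simp only [Matrix.submatrix_apply, Equiv.sumCompl_apply_inl, Equiv.sumCompl_apply_inr,
          Matrix.of_apply, Matrix.fromBlocks_apply₂₁]
        refine (congrFun (Finset.piecewise_eq_of_notMem s (A : J → J → K) (1 : Matrix J J K) i.2) _).trans ?_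
        rw [Matrix.one_apply, if_neg, Matrix.zero_apply]
        intro h
        exact i.2 (h ▸ j.2)
      | inr j =>
        simp only [Matrix.submatrix_apply, Equiv.sumCompl_apply_inr, Matrix.of_apply,
          Matrix.fromBlocks_apply₂₂]
        refine (congrFun (Finset.piecewise_eq_of_notMem s (A : J → J → K) (1 : Matrix J J K) i.2) _).trans ?_
        rw [Matrix.one_apply, Matrix.one_apply]
        exact if_congr Subtype.coe_injective.eq_iff rfl rfl
  rw [this, Matrix.det_fromBlocks_zero₂₁, Matrix.det_one, mul_one, minor]

lemma det_add_one (A : Matrix J J K) :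
    Matrix.det (A + 1) = ∑ s : Finset J, minor A s := by
  classical
  have h1 : Matrix.det (A + 1)
      = Matrix.detRowAlternating ((A : J → J → K) + (1 : Matrix J J K)) := rfl
  rw [h1, ← AlternatingMap.coe_multilinearMap]
  erw [MultilinearMap.map_add_univ]
  apply Finset.sum_congr rfl
  intro s _
  exact det_piecewise A s

lemma det_one_sub (Q : Matrix J J K) :
    Matrix.det (1 - Q) = ∑ s : Finset J, (-1 : K) ^ s.card * minor Q s := by
  have : (1 - Q) = (-Q) + 1 := sub_eq_neg_add 1 Q
  rw [this, det_add_one]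
  apply Finset.sum_congr rfl
  intro s _
  have : minor (-Q) s = (-1 : K) ^ s.card * minor Q s := by
    rw [minor, minor, show (-Q).submatrix (fun i : ↥s => (i : J)) (fun i : ↥s => (i : J))
        = -(Q.submatrix (fun i : ↥s => (i : J)) (fun i : ↥s => (i : J))) from rfl,
      Matrix.det_neg, Fintype.card_coe]
  rw [this]

end Det


section SumMinor

variable {β : Type*} [DecidableEq β]

lemma powerset_map' {α γ : Type*} (f : α ↪ γ) (s : Finset α) :
    (s.map f).powerset = s.powerset.map (Finset.mapEmbedding f).toEmbedding := by
  ext t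
  simp only [Finset.mem_powerset, Finset.mem_map, Finset.subset_map_iff,
    RelEmbedding.coe_toEmbedding, Finset.mapEmbedding_apply]
  constructor
  · rintro ⟨u, hu, rfl⟩; exact ⟨u, hu, rfl⟩
  · rintro ⟨u, hu, rfl⟩; exact ⟨u, hu, rfl⟩

lemma minor_map {α : Type*} [DecidableEq α] (A : Matrix (α ⊕ β) (α ⊕ β) K)
    (Q : Matrix β β K) (hA : ∀ x y, A (Sum.inr x) (Sum.inr y) = Q x y) (t : Finset β) :
    minor A (t.map ⟨Sum.inr, Sum.inr_injective⟩) = minor Q t := by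
  classical
  have hbij : Function.Bijective (fun x : ↥t =>
      (⟨(Sum.inr ↑x : α ⊕ β), Finset.mem_map_of_mem _ x.2⟩ :
        ↥(t.map (⟨Sum.inr, Sum.inr_injective⟩ : β ↪ α ⊕ β)))) := by
    constructor
    · intro a b hab
      apply Subtype.ext
      exact Sum.inr_injective (congrArg Subtype.val hab)
    · rintro ⟨y, hy⟩
      obtain ⟨x, hx, rfl⟩ := Finset.mem_map.1 hy
      exact ⟨⟨x, hx⟩, rfl⟩
  set e := Equiv.ofBijective _ hbij
  rw [minor, ← Matrix.det_submatrix_equiv_self e, minor]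
  congr 1
  ext x y
  simp only [Matrix.submatrix_apply]
  exact hA x y

lemma minor_insert_inl (A : Matrix (Unit ⊕ β) (Unit ⊕ β) K)
    (Q : Matrix β β K) (hA11 : A (Sum.inl ()) (Sum.inl ()) = 1)
    (hA21 : ∀ x, A (Sum.inr x) (Sum.inl ()) = 0)
    (hA : ∀ x y, A (Sum.inr x) (Sum.inr y) = Q x y) (t : Finset β) :
    minor A (insert (Sum.inl ()) (t.map ⟨Sum.inr, Sum.inr_injective⟩)) = minor Q t := by
  classical
  set u : Finset (Unit ⊕ β) := t.map ⟨Sum.inr, Sum.inr_injective⟩ with hu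
  have hinl : ∀ x : ↥u, ∃ x' : β, (x : Unit ⊕ β) = Sum.inr x' := by
    rintro ⟨y, hy⟩
    obtain ⟨x, hx, rfl⟩ := Finset.mem_map.1 hy
    exact ⟨x, rfl⟩
  have hbij : Function.Bijective (Sum.elim
      (fun _ : Unit => (⟨Sum.inl (), Finset.mem_insert_self _ _⟩ : ↥(insert (Sum.inl ()) u)))
      (fun x : ↥u => (⟨(x : Unit ⊕ β), Finset.mem_insert_of_mem x.2⟩ :
        ↥(insert (Sum.inl ()) u)))) := by
    constructor
    · intro a b hab
      have hab' := congrArg Subtype.val hab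
      match a, b with
      | Sum.inl a, Sum.inl b => rfl
      | Sum.inl a, Sum.inr b =>
        obtain ⟨b', hb'⟩ := hinl b
        simp only [Sum.elim_inl, Sum.elim_inr, hb'] at hab'
        exact absurd hab' (by simp)
      | Sum.inr a, Sum.inl b =>
        obtain ⟨a', ha'⟩ := hinl a
        simp only [Sum.elim_inl, Sum.elim_inr, ha'] at hab'
        exact absurd hab' (by simp)
      | Sum.inr a, Sum.inr b =>
        simp only [Sum.elim_inr] at hab'
        exact congrArg Sum.inr (Subtype.ext hab')
    · rintro ⟨y, hy⟩
      rcases Finset.mem_insert.1 hy with h | h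
      · exact ⟨Sum.inl (), by simp [h]⟩
      · exact ⟨Sum.inr ⟨y, h⟩, rfl⟩
  set e := Equiv.ofBijective _ hbij
  rw [minor, ← Matrix.det_submatrix_equiv_self e]
  have hblock : (A.submatrix (fun i : ↥(insert (Sum.inl ()) u) => (i : Unit ⊕ β))
        (fun i : ↥(insert (Sum.inl ()) u) => (i : Unit ⊕ β))).submatrix e e
      = Matrix.fromBlocks (1 : Matrix Unit Unit K)
          (Matrix.of fun (_ : Unit) (y : ↥u) => A (Sum.inl ()) (y : Unit ⊕ β)) 0
          (A.submatrix (fun i : ↥u => (i : Unit ⊕ β)) (fun i : ↥u => (i : Unit ⊕ β))) := by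
    ext i j
    cases i with
    | inl i =>
      cases j with
      | inl j =>
        simp only [Matrix.submatrix_apply, e, Equiv.ofBijective_apply, Sum.elim_inl,
          Matrix.fromBlocks_apply₁₁, Matrix.one_apply_eq]
        exact hA11
      | inr j => rfl
    | inr i =>
      cases j with
      | inl j =>
        obtain ⟨i', hi'⟩ := hinl i
        simp only [Matrix.submatrix_apply, e, Equiv.ofBijective_apply, Sum.elim_inl,
          Sum.elim_inr, Matrix.fromBlocks_apply₂₁, hi', Matrix.zero_apply]
        exact hA21 i'
      | inr j => rfl
  rw [hblock, Matrix.det_fromBlocks_zero₂₁, Matrix.det_one, one_mul, hu]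
  exact minor_map A Q hA t

end SumMinor

end Stmt5Aux

/-!
STATEMENT 5.  `W` is a vector space of dimension `n - 1` (here we write the
ambient space as `K × W`, of dimension `n`), `P : W → W` is linear and
`A = id_K ⊕ P`.  Then `Σ_{k=0}^n (-1)^k k · tr(Λ^k A) = - det(id_W - P)`. -/
theorem stmt5 (K : Type*) [Field K] (W : Type*) [AddCommGroup W] [Module K W]
    [FiniteDimensional K W] (n : ℕ) (hn : Module.finrank K W + 1 = n)
    (P : W →ₗ[K] W) :
    ∑ k ∈ Finset.range (n + 1),
        (-1 : K) ^ k * (k : K) *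
          LinearMap.trace K (⋀[K]^k (K × W))
            (extPowMap K k (LinearMap.prodMap LinearMap.id P)) =
      - LinearMap.det ((LinearMap.id : W →ₗ[K] W) - P) := by
  classical
  subst hn
  set m := Module.finrank K W with hm
  letI : LinearOrder (Unit ⊕ Fin m) :=
    LinearOrder.lift' (Sum.elim (fun _ => (0 : ℕ)) (fun j => (j : ℕ) + 1)) (by
      rintro (a | a) (b | b) h <;>
        simp only [Sum.elim_inl, Sum.elim_inr] at h
      · rfl
      · omega
      · omega
      · exact congrArg Sum.inr (Fin.val_injective (by omega)))
  let bW : Module.Basis (Fin m) K W := Module.finBasis K W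
  let bP : Module.Basis (Unit ⊕ Fin m) K (K × W) := (Module.Basis.singleton Unit K).prod bW
  set Q : Matrix (Fin m) (Fin m) K := LinearMap.toMatrix bW bW P with hQ
  set A : Matrix (Unit ⊕ Fin m) (Unit ⊕ Fin m) K := Matrix.fromBlocks 1 0 0 Q with hAdef
  have hA : LinearMap.toMatrix bP bP (LinearMap.prodMap LinearMap.id P) = A := by
    rw [hAdef, show (LinearMap.prodMap LinearMap.id P : (K × W) →ₗ[K] (K × W))
        = (LinearMap.id : Module.End K K).prodMap P from rfl,
      LinearMap.toMatrix_prodMap, LinearMap.toMatrix_id, hQ]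
  -- the entries of `A`
  have hA11 : A (Sum.inl ()) (Sum.inl ()) = 1 := by
    rw [hAdef, Matrix.fromBlocks_apply₁₁, Matrix.one_apply_eq]
  have hA21 : ∀ x, A (Sum.inr x) (Sum.inl ()) = 0 := fun x => by
    rw [hAdef, Matrix.fromBlocks_apply₂₁, Matrix.zero_apply]
  have hA22 : ∀ x y, A (Sum.inr x) (Sum.inr y) = Q x y := fun x y => by
    rw [hAdef, Matrix.fromBlocks_apply₂₂]
  -- Step 1: traces are sums of principal minors
  have h1 : ∀ k, LinearMap.trace K (⋀[K]^k (K × W))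
      (extPowMap K k (LinearMap.prodMap LinearMap.id P))
      = ∑ s ∈ Finset.univ.powersetCard k, Stmt5Aux.minor A s := fun k => by
    rw [Stmt5Aux.trace_extPow bP, hA]
  have h2 : ∀ k ∈ Finset.range (m + 1 + 1),
      (-1 : K) ^ k * (k : K) * LinearMap.trace K (⋀[K]^k (K × W))
        (extPowMap K k (LinearMap.prodMap LinearMap.id P))
      = ∑ s ∈ Finset.univ.powersetCard k,
          (-1 : K) ^ s.card * (s.card : K) * Stmt5Aux.minor A s := by
    intro k _
    rw [h1 k, Finset.mul_sum]
    apply Finset.sum_congr rfl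
    intro s hs
    rw [(Finset.mem_powersetCard.1 hs).2]
  rw [Finset.sum_congr rfl h2]
  have hcard : m + 1 + 1 = (Finset.univ : Finset (Unit ⊕ Fin m)).card + 1 := by
    simp only [Finset.card_univ, Fintype.card_sum, Fintype.card_unit, Fintype.card_fin]
    omega
  rw [hcard, ← Finset.sum_powerset]
  -- Step 2: split subsets according to whether they contain `Sum.inl ()`
  have hnot : (Sum.inl () : Unit ⊕ Fin m)
      ∉ (Finset.univ : Finset (Fin m)).map (⟨Sum.inr, Sum.inr_injective⟩ : Fin m ↪ Unit ⊕ Fin m) := by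
    simp
  have huniv : (Finset.univ : Finset (Unit ⊕ Fin m)) = insert (Sum.inl ())
      ((Finset.univ : Finset (Fin m)).map (⟨Sum.inr, Sum.inr_injective⟩ : Fin m ↪ Unit ⊕ Fin m)) := by
    ext x
    cases x <;> simp
  rw [huniv, Finset.sum_powerset_insert hnot, Stmt5Aux.powerset_map', Finset.sum_map,
    Finset.sum_map, ← Finset.sum_add_distrib]
  have h3 : ∀ t : Finset (Fin m),
      (fun s => (-1 : K) ^ s.card * (s.card : K) * Stmt5Aux.minor A s)
        ((Finset.mapEmbedding (⟨Sum.inr, Sum.inr_injective⟩ : Fin m ↪ Unit ⊕ Fin m)).toEmbedding t)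
      + (fun s => (-1 : K) ^ s.card * (s.card : K) * Stmt5Aux.minor A s)
        (insert (Sum.inl ())
          ((Finset.mapEmbedding
            (⟨Sum.inr, Sum.inr_injective⟩ : Fin m ↪ Unit ⊕ Fin m)).toEmbedding t))
      = -((-1 : K) ^ t.card * Stmt5Aux.minor Q t) := by
    intro t
    have hmem : (Sum.inl () : Unit ⊕ Fin m)
        ∉ t.map (⟨Sum.inr, Sum.inr_injective⟩ : Fin m ↪ Unit ⊕ Fin m) := by simp
    simp only [RelEmbedding.coe_toEmbedding, Finset.mapEmbedding_apply]
    rw [Stmt5Aux.minor_map A Q hA22 t, Stmt5Aux.minor_insert_inl A Q hA11 hA21 hA22 t,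
      Finset.card_insert_of_notMem hmem, Finset.card_map]
    push_cast [pow_succ]
    ring
  rw [Finset.sum_congr rfl (fun t _ => h3 t), Finset.sum_neg_distrib]
  -- Step 3: identify the remaining sum with the determinant
  have h4 : LinearMap.det ((LinearMap.id : W →ₗ[K] W) - P) = Matrix.det (1 - Q) := by
    rw [← LinearMap.det_toMatrix bW, map_sub, LinearMap.toMatrix_id, hQ]
  rw [h4, Stmt5Aux.det_one_sub]
  congr 1
end

section
/- Let A = A_u ⊕ A_s be a linear automorphism of a finite-dimensional real vector space E = E_u ⊕ E_s, where every (complex) eigenvalue of A_u has modulus strictly greater than 1 and every eigenvalue of A_s has modulus strictly less than 1. Then det(id − A) ≠ 0 and |det(id − A)| = (−1)^{dim E_u} · sign(det A_u) · det(id − A), i.e. the sign of det(id − A) equals (−1)^{dim E_u} sign(det A_u). In particular, if A preserves orientation on E_u (det A_u > 0), then |det(id − A)| = (−1)^{dim E_u} det(id − A). -/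
set_option maxHeartbeats 1000000

open Polynomial

lemma aux_pos (p : ℝ[X]) (hlc : 0 < p.leadingCoeff)
    (h : ∀ x : ℝ, 1 ≤ x → ¬ p.IsRoot x) : 0 < p.eval 1 := by
  have hp : p ≠ 0 := fun h0 => by simp [h0] at hlc
  by_contra hle
  push_neg at hle
  rcases lt_or_ge 0 p.degree with hdeg | hdeg
  · have htop := Polynomial.tendsto_atTop_of_leadingCoeff_nonneg p hdeg hlc.le
    obtain ⟨y, hy⟩ := ((htop.eventually_gt_atTop 0).and (Filter.eventually_ge_atTop 1)).exists
    obtain ⟨x, hx, hx0⟩ := intermediate_value_Icc hy.2 (p.continuous.continuousOn)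
      ⟨hle, hy.1.le⟩
    exact h x hx.1 hx0
  · obtain ⟨a, rfl⟩ : ∃ a, p = C a := ⟨p.coeff 0, (Polynomial.eq_C_of_degree_le_zero hdeg)⟩
    simp only [eval_C] at hle
    rw [leadingCoeff_C] at hlc
    exact absurd hle (not_le.mpr hlc)

lemma eval_one_pos_of_roots_lt (p : ℝ[X]) (hm : p.Monic)
    (h : ∀ z : ℂ, (p.map (algebraMap ℝ ℂ)).IsRoot z → ‖z‖ < 1) :
    0 < p.eval 1 := by
  apply aux_pos p (by rw [hm.leadingCoeff]; exact one_pos)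
  intro x hx hr
  have h1 := h _ (hr.map (f := algebraMap ℝ ℂ))
  rw [Complex.coe_algebraMap, Complex.norm_real, Real.norm_eq_abs] at h1
  exact absurd h1 (not_lt.mpr (le_abs_self x |>.trans' hx))

lemma eval_one_sign_of_roots_gt (p : ℝ[X]) (hm : p.Monic)
    (h : ∀ z : ℂ, (p.map (algebraMap ℝ ℂ)).IsRoot z → 1 < ‖z‖) :
    0 < p.coeff 0 * p.eval 1 := by
  have hc0 : p.coeff 0 ≠ 0 := by
    intro hc
    have : p.IsRoot 0 := by rwa [IsRoot, ← coeff_zero_eq_eval_zero]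
    have h1 := h _ (this.map (f := algebraMap ℝ ℂ))
    simp at h1
    linarith
  -- no real roots of reverse p in [1, ∞)
  have hnr : ∀ x : ℝ, 1 ≤ x → ¬ (p.reverse).IsRoot x := by
    intro x hx hr
    have hx0 : x⁻¹ ≠ 0 := inv_ne_zero (by linarith)
    haveI := invertibleOfNonzero hx0
    have hiff := eval₂_reverse_eq_zero_iff (RingHom.id ℝ) x⁻¹ p
    rw [invOf_eq_inv, inv_inv] at hiff
    have hroot : p.IsRoot x⁻¹ := by
      have := hiff.mp (by exact hr)
      exact this
    have h1 := h _ (hroot.map (f := algebraMap ℝ ℂ))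
    rw [Complex.coe_algebraMap, Complex.norm_real, Real.norm_eq_abs, abs_inv,
      abs_of_nonneg (by linarith : (0:ℝ) ≤ x)] at h1
    have : x⁻¹ ≤ 1 := inv_le_one_of_one_le₀ hx
    linarith
  have heval : (p.reverse).eval 1 = p.eval 1 := by
    haveI : Invertible (1 : ℝ) := invertibleOne
    have := eval₂_reverse_mul_pow (RingHom.id ℝ) (1 : ℝ) p
    rw [invOf_one, one_pow, mul_one] at this
    exact this
  have hlcrev : (p.reverse).leadingCoeff = p.coeff 0 := by
    rw [reverse_leadingCoeff, trailingCoeff,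
      natTrailingDegree_eq_zero.mpr (Or.inr hc0)]
  rcases hc0.lt_or_gt with hc | hc
  · have := aux_pos (-p.reverse) (by rwa [leadingCoeff_neg, hlcrev, neg_pos])
      (fun x hx hr => hnr x hx (by simpa [IsRoot, eval_neg, neg_eq_zero] using hr))
    rw [eval_neg, heval] at this
    exact mul_pos_of_neg_of_neg hc (by linarith)
  · have := aux_pos p.reverse (by rwa [hlcrev]) hnr
    rw [heval] at this
    exact mul_pos hc this

lemma det_id_sub {E : Type*} [AddCommGroup E] [Module ℝ E] [FiniteDimensional ℝ E]
    (f : E →ₗ[ℝ] E) :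
    LinearMap.det ((LinearMap.id : E →ₗ[ℝ] E) - f) = (LinearMap.charpoly f).eval 1 := by
  let b := Module.Free.chooseBasis ℝ E
  rw [LinearMap.charpoly_def, ← LinearMap.det_toMatrix b]
  set M := LinearMap.toMatrix b b f with hM
  have h1 : LinearMap.toMatrix b b ((LinearMap.id : E →ₗ[ℝ] E) - f) = 1 - M := by
    rw [map_sub, LinearMap.toMatrix_id]
  rw [h1, Matrix.charpoly, ← Polynomial.coe_evalRingHom, RingHom.map_det]
  congr 1
  ext i j
  rcases eq_or_ne i j with rfl | hij
  · simp [Matrix.charmatrix_apply_eq, Matrix.one_apply]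
  · simp [Matrix.charmatrix_apply_ne _ _ _ hij, Matrix.one_apply, hij]


/-!
STATEMENT 6 (sign of `det(id - A)` for a hyperbolic map).  `A = A_u ⊕ A_s` on
`E = E_u × E_s`, where every complex eigenvalue (i.e. every complex root of the
characteristic polynomial) of `A_u` has modulus `> 1` and every complex
eigenvalue of `A_s` has modulus `< 1`.  Then `det(id - A) ≠ 0`,
`|det(id - A)| = (-1)^{dim E_u} · sign(det A_u) · det(id - A)`, and in
particular if `det A_u > 0` then `|det(id - A)| = (-1)^{dim E_u} det(id - A)`. -/
theorem stmt6 (Eu Es : Type*) [AddCommGroup Eu] [Module ℝ Eu]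
    [FiniteDimensional ℝ Eu] [AddCommGroup Es] [Module ℝ Es]
    [FiniteDimensional ℝ Es]
    (Au : Eu →ₗ[ℝ] Eu) (As : Es →ₗ[ℝ] Es)
    (hAu : ∀ z : ℂ, ((LinearMap.charpoly Au).map (algebraMap ℝ ℂ)).IsRoot z →
      1 < ‖z‖)
    (hAs : ∀ z : ℂ, ((LinearMap.charpoly As).map (algebraMap ℝ ℂ)).IsRoot z →
      ‖z‖ < 1) :
    LinearMap.det ((LinearMap.id : Eu × Es →ₗ[ℝ] Eu × Es) -
        LinearMap.prodMap Au As) ≠ 0 ∧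
      |LinearMap.det ((LinearMap.id : Eu × Es →ₗ[ℝ] Eu × Es) -
          LinearMap.prodMap Au As)| =
        (-1 : ℝ) ^ (Module.finrank ℝ Eu) * Real.sign (LinearMap.det Au) *
          LinearMap.det ((LinearMap.id : Eu × Es →ₗ[ℝ] Eu × Es) -
            LinearMap.prodMap Au As) ∧
      (0 < LinearMap.det Au →
        |LinearMap.det ((LinearMap.id : Eu × Es →ₗ[ℝ] Eu × Es) -
            LinearMap.prodMap Au As)| =
          (-1 : ℝ) ^ (Module.finrank ℝ Eu) *
            LinearMap.det ((LinearMap.id : Eu × Es →ₗ[ℝ] Eu × Es) -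
              LinearMap.prodMap Au As)) := by
  have hs : 0 < (LinearMap.charpoly As).eval 1 :=
    eval_one_pos_of_roots_lt _ (As.charpoly_monic) hAs
  have hu : 0 < (LinearMap.charpoly Au).coeff 0 * (LinearMap.charpoly Au).eval 1 :=
    eval_one_sign_of_roots_gt _ (Au.charpoly_monic) hAu
  have hD : LinearMap.det ((LinearMap.id : Eu × Es →ₗ[ℝ] Eu × Es) -
      LinearMap.prodMap Au As)
      = (LinearMap.charpoly Au).eval 1 * (LinearMap.charpoly As).eval 1 := by
    rw [det_id_sub, LinearMap.charpoly_prodMap, Polynomial.eval_mul]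
  have hdet : LinearMap.det Au =
      (-1) ^ (Module.finrank ℝ Eu) * (LinearMap.charpoly Au).coeff 0 :=
    LinearMap.det_eq_sign_charpoly_coeff Au
  rw [hD]
  set n := Module.finrank ℝ Eu
  set c := (LinearMap.charpoly Au).coeff 0 with hc'
  set u := (LinearMap.charpoly Au).eval 1 with hu'
  set s := (LinearMap.charpoly As).eval 1 with hs'
  rcases Nat.even_or_odd n with hn | hn
  · have h1 : ((-1:ℝ))^n = 1 := hn.neg_one_pow
    rw [h1, hdet, h1, one_mul c]
    rcases mul_pos_iff.mp hu with ⟨hc, hu1⟩ | ⟨hc, hu1⟩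
    · have hDpos : 0 < u * s := mul_pos hu1 hs
      rw [Real.sign_of_pos hc, abs_of_pos hDpos]
      exact ⟨hDpos.ne', by ring, fun _ => by ring⟩
    · have hDneg : u * s < 0 := mul_neg_of_neg_of_pos hu1 hs
      rw [Real.sign_of_neg hc, abs_of_neg hDneg]
      exact ⟨hDneg.ne, by ring, fun hpos => absurd hpos (not_lt.mpr hc.le)⟩
  · have h1 : ((-1:ℝ))^n = -1 := hn.neg_one_pow
    rw [h1, hdet, h1]
    rcases mul_pos_iff.mp hu with ⟨hc, hu1⟩ | ⟨hc, hu1⟩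
    · have hDpos : 0 < u * s := mul_pos hu1 hs
      have hneg : (-1:ℝ) * c < 0 := by linarith
      rw [Real.sign_of_neg hneg, abs_of_pos hDpos]
      exact ⟨hDpos.ne', by ring, fun hpos => absurd hpos (not_lt.mpr hneg.le)⟩
    · have hDneg : u * s < 0 := mul_neg_of_neg_of_pos hu1 hs
      have hpos : 0 < (-1:ℝ) * c := by linarith
      rw [Real.sign_of_pos hpos, abs_of_neg hDneg]
      exact ⟨hDneg.ne, by ring, fun _ => by ring⟩
end

section
/- Let M be a smooth manifold, θ a contact-type 1-form with vector field X satisfying ι_X θ = 1, ι_X dθ = 0. Let ∇ be a flat connection on a vector bundle E over M, and L = ∇ι_X + ι_X∇ the twisted Lie derivative on E-valued forms. For μ an E-valued k-form with ι_X μ = 0, define Ψμ = ∇μ − (−1)^k (Lμ) ∧ θ. Then Ψ²μ = −(Lμ) ∧ dθ. -/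
/-!
Everything happens in the ring of operators, with `L = D I + I D`. Flatness gives `D L = L D`,
and `ε` commutes with `L` since it anticommutes with both `D` and `I`. The relations
`ι_X θ = 1` and `ι_X dθ = 0` give `L Wθ = Wθ L` (Cartan's formula for `L_X θ = 0`). Expanding
`Ψ² = (D - Wθ L ε)²`, the two terms `± Wθ L D ε` cancel, the square of `Wθ L ε` vanishes
because `θ ∧ θ = 0`, and what remains is the Leibniz term `-(dθ) ∧ L`.
-/

section OperatorRing

variable {R : Type*} [Ring R]

theorem commute_mul_add_mul_of_mul_self_eq_zero {D : R} (hDD : D * D = 0) (I : R) :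
    Commute D (D * I + I * D) :=
  calc D * (D * I + I * D)
      = (D * D) * I + D * I * D := by noncomm_ring
    _ = D * I * D + I * (D * D) := by rw [hDD]; noncomm_ring
    _ = (D * I + I * D) * D := by noncomm_ring

theorem commute_mul_add_mul_of_anticommute {ε a b : R} (ha : ε * a = -(a * ε))
    (hb : ε * b = -(b * ε)) : Commute ε (a * b + b * a) :=
  calc ε * (a * b + b * a)
      = (ε * a) * b + (ε * b) * a := by noncomm_ring
    _ = -(a * ε * b) - b * ε * a := by rw [ha, hb]; noncomm_ring
    _ = -(a * (ε * b)) - b * (ε * a) := by noncomm_ring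
    _ = (a * b + b * a) * ε := by rw [ha, hb]; noncomm_ring

variable {D I Wθ Wdθ ε : R}

theorem commute_mul_add_mul_of_leibniz (hIWθ : I * Wθ = Wθ * I + ε) (hIWdθ : I * Wdθ = Wdθ * I)
    (hDWθ : D * Wθ = Wθ * D + Wdθ * ε) (hεD : ε * D = -(D * ε)) (hεI : ε * I = -(I * ε)) :
    Commute (D * I + I * D) Wθ := by
  have hεD' : D * ε + ε * D = 0 := by rw [hεD, add_neg_cancel]
  have hεI' : Wdθ * (ε * I) + I * Wdθ * ε = 0 := by
    rw [hεI, hIWdθ, mul_neg, mul_assoc, neg_add_cancel]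
  calc (D * I + I * D) * Wθ
      = D * (I * Wθ) + I * (D * Wθ) := by rw [add_mul, mul_assoc, mul_assoc]
    _ = Wθ * (D * I + I * D) + (D * ε + ε * D) + (Wdθ * (ε * I) + I * Wdθ * ε) := by
        rw [hIWθ, hDWθ, mul_add, mul_add, ← mul_assoc D, hDWθ, ← mul_assoc I, hIWθ]
        noncomm_ring
    _ = Wθ * (D * I + I * D) := by rw [hεD', hεI', add_zero, add_zero]

theorem contact_differential_mul_self_eq (hDD : D * D = 0) (hWθWθ : Wθ * Wθ = 0)
    (hIWθ : I * Wθ = Wθ * I + ε) (hIWdθ : I * Wdθ = Wdθ * I) (hDWθ : D * Wθ = Wθ * D + Wdθ * ε)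
    (hεε : ε * ε = 1) (hεD : ε * D = -(D * ε)) (hεI : ε * I = -(I * ε))
    (hεWθ : ε * Wθ = -(Wθ * ε)) :
    (D - Wθ * (D * I + I * D) * ε) * (D - Wθ * (D * I + I * D) * ε) =
      -(Wdθ * (D * I + I * D)) := by
  set L := D * I + I * D
  have hDL : D * L = L * D := commute_mul_add_mul_of_mul_self_eq_zero hDD I
  have hεL : ε * L = L * ε := commute_mul_add_mul_of_anticommute hεD hεI
  have hLWθ : L * Wθ = Wθ * L := commute_mul_add_mul_of_leibniz hIWθ hIWdθ hDWθ hεD hεI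
  have hεLε : ε * L * ε = L := by rw [hεL, mul_assoc, hεε, mul_one]
  have hD_left : D * (Wθ * L * ε) = Wθ * L * D * ε + Wdθ * L :=
    calc D * (Wθ * L * ε)
        = (D * Wθ) * L * ε := by simp only [mul_assoc]
      _ = Wθ * (D * L) * ε + Wdθ * (ε * L * ε) := by
          rw [hDWθ]; simp only [add_mul, mul_assoc]
      _ = Wθ * L * D * ε + Wdθ * L := by rw [hDL, hεLε]; simp only [mul_assoc]
  have hD_right : Wθ * L * ε * D = -(Wθ * L * D * ε) := by
    rw [mul_assoc, hεD, mul_neg, ← mul_assoc]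
  have hθθ : Wθ * L * ε * (Wθ * L * ε) = 0 :=
    calc Wθ * L * ε * (Wθ * L * ε)
        = Wθ * L * (ε * Wθ) * L * ε := by simp only [mul_assoc]
      _ = -(Wθ * (L * Wθ) * (ε * L * ε)) := by rw [hεWθ]; simp only [mul_neg, neg_mul, mul_assoc]
      _ = 0 := by rw [hLWθ, ← mul_assoc Wθ Wθ, hWθWθ, zero_mul, zero_mul, neg_zero]
  rw [sub_mul, mul_sub, mul_sub, hDD, hD_left, hD_right, hθθ]
  abel

end OperatorRing

theorem stmt8_general (K : Type*) [Field K] (Ω : Type*) [AddCommGroup Ω] [Module K Ω]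
    (D I Wθ Wdθ eps : Module.End K Ω)
    (hDD : D * D = 0)
    (hWθWθ : Wθ * Wθ = 0)
    (hIWθ : I * Wθ = Wθ * I + eps)
    (hIWdθ : I * Wdθ = Wdθ * I)
    (hDWθ : D * Wθ = Wθ * D + Wdθ * eps)
    (heps2 : eps * eps = 1)
    (hepsD : eps * D = -(D * eps))
    (hepsI : eps * I = -(I * eps))
    (hepsWθ : eps * Wθ = -(Wθ * eps))
    (L Ψ : Module.End K Ω)
    (hL : L = D * I + I * D)
    (hΨ : Ψ = D - Wθ * L * eps) :
    ∀ μ : Ω, I μ = 0 → Ψ (Ψ μ) = -(Wdθ (L μ)) := by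
  intro μ _
  have hΨΨ : Ψ * Ψ = -(Wdθ * L) := by
    rw [hΨ, hL]
    exact contact_differential_mul_self_eq hDD hWθWθ hIWθ hIWdθ hDWθ heps2 hepsD hepsI hepsWθ
  simpa using LinearMap.congr_fun hΨΨ μ

theorem stmt8 (K : Type*) [Field K] (Ω : Type*) [AddCommGroup Ω] [Module K Ω]
    (D I Wθ Wdθ eps : Module.End K Ω)
    (hDD : D * D = 0)
    (hII : I * I = 0)
    (hWθWθ : Wθ * Wθ = 0)
    (hIWθ : I * Wθ = Wθ * I + eps)
    (hIWdθ : I * Wdθ = Wdθ * I)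
    (hDWθ : D * Wθ = Wθ * D + Wdθ * eps)
    (hDWdθ : D * Wdθ = Wdθ * D)
    (heps2 : eps * eps = 1)
    (hepsD : eps * D = -(D * eps))
    (hepsI : eps * I = -(I * eps))
    (hepsWθ : eps * Wθ = -(Wθ * eps))
    (hepsWdθ : eps * Wdθ = Wdθ * eps)
    (L Ψ : Module.End K Ω)
    (hL : L = D * I + I * D)
    (hΨ : Ψ = D - Wθ * L * eps) :
    ∀ μ : Ω, I μ = 0 → Ψ (Ψ μ) = -(Wdθ (L μ)) :=
  stmt8_general K Ω D I Wθ Wdθ eps hDD hWθWθ hIWθ hIWdθ hDWθ heps2 hepsD hepsI hepsWθ L Ψ hL hΨ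
end

section
/- Under the hypotheses of the previous contact setting (ι_X θ = 1, ι_X dθ = 0, L = ∇ι_X + ι_X∇, Ψμ = ∇μ − (−1)^k(Lμ)∧θ for ι_X μ = 0), the operator Ψ commutes with wedging by powers of dθ: for every μ with ι_X μ = 0 and every j ∈ ℕ, Ψ(μ ∧ (dθ)^j) = (Ψμ) ∧ (dθ)^j. -/
/-! Wedging by `dθ` commutes with `∇`, `ι_X`, `θ ∧ ·` and the sign operator, because `dθ` is
closed, of even degree and killed by `ι_X`; hence it commutes with every noncommutative
polynomial in them, in particular with `L` and `Ψ`, and so do its powers. -/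

theorem Commute.sub_mul_add_mul_mul_left {R : Type*} [Ring R] {D I T e w : R}
    (hD : Commute D w) (hI : Commute I w) (hT : Commute T w) (he : Commute e w) :
    Commute (D - T * (D * I + I * D) * e) w :=
  hD.sub_left ((hT.mul_left ((hD.mul_left hI).add_left (hI.mul_left hD))).mul_left he)

theorem stmt9_general (K : Type*) [Field K] (Ω : Type*) [AddCommGroup Ω] [Module K Ω]
    (D I Wθ Wdθ eps : Module.End K Ω)
    (hWθWdθ : Wθ * Wdθ = Wdθ * Wθ)
    (hIWdθ : I * Wdθ = Wdθ * I)
    (hDWdθ : D * Wdθ = Wdθ * D)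
    (hepsWdθ : eps * Wdθ = Wdθ * eps)
    (L Ψ : Module.End K Ω)
    (hL : L = D * I + I * D)
    (hΨ : Ψ = D - Wθ * L * eps) :
    ∀ μ : Ω, I μ = 0 → ∀ j : ℕ, Ψ ((Wdθ ^ j) μ) = (Wdθ ^ j) (Ψ μ) := by
  intro μ _ j
  have hΨ_comm : Commute Ψ Wdθ := by
    rw [hΨ, hL]
    exact Commute.sub_mul_add_mul_mul_left hDWdθ hIWdθ hWθWdθ hepsWdθ
  exact LinearMap.congr_fun (hΨ_comm.pow_right j).eq μ

theorem stmt9 (K : Type*) [Field K] (Ω : Type*) [AddCommGroup Ω] [Module K Ω]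
    (D I Wθ Wdθ eps : Module.End K Ω)
    (hDD : D * D = 0)
    (hII : I * I = 0)
    (hWθWθ : Wθ * Wθ = 0)
    (hWθWdθ : Wθ * Wdθ = Wdθ * Wθ)
    (hIWθ : I * Wθ = Wθ * I + eps)
    (hIWdθ : I * Wdθ = Wdθ * I)
    (hDWθ : D * Wθ = Wθ * D + Wdθ * eps)
    (hDWdθ : D * Wdθ = Wdθ * D)
    (heps2 : eps * eps = 1)
    (hepsD : eps * D = -(D * eps))
    (hepsI : eps * I = -(I * eps))
    (hepsWθ : eps * Wθ = -(Wθ * eps))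
    (hepsWdθ : eps * Wdθ = Wdθ * eps)
    (L Ψ : Module.End K Ω)
    (hL : L = D * I + I * D)
    (hΨ : Ψ = D - Wθ * L * eps) :
    ∀ μ : Ω, I μ = 0 → ∀ j : ℕ, Ψ ((Wdθ ^ j) μ) = (Wdθ ^ j) (Ψ μ) :=
  stmt9_general K Ω D I Wθ Wdθ eps hWθWdθ hIWdθ hDWdθ hepsWdθ L Ψ hL hΨ
end

section
/- Let γ : [0,1] → M be a smooth curve, ∇ a connection on a vector bundle E over M, and α ∈ Ω¹(M, End(E)). Let P_t and P̃_t denote the parallel transports E_{γ(0)} → E_{γ(t)} of ∇ and of ∇̃ = ∇ + α along γ|_{[0,t]} respectively. Then det(P̃_1 ∘ P_1^{−1}) = exp(−∫_0^1 tr(α(γ'(τ))(γ(τ))) dτ), where tr is the fiberwise trace on End(E). -/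
set_option maxHeartbeats 1000000

open Matrix Finset in
theorem aux_det_hasDerivAt {n : Type*} [Fintype n] [DecidableEq n]
    (M : ℝ → Matrix n n ℝ) (M' : Matrix n n ℝ) (t : ℝ)
    (h : ∀ i j, HasDerivAt (fun s => M s i j) (M' i j) t) :
    HasDerivAt (fun s => (M s).det)
      (∑ i, ((M t).updateRow i (M' i)).det) t := by
  have key : ∀ N : Matrix n n ℝ,
      N.det = ∑ σ : Equiv.Perm n, ((Equiv.Perm.sign σ : ℤ) : ℝ) * ∏ i, N i (σ i) := by
    intro N
    rw [← Matrix.det_transpose, Matrix.det_apply']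
    simp [Matrix.transpose_apply]
  have hσ : ∀ σ : Equiv.Perm n, HasDerivAt (fun s => ∏ i, M s i (σ i))
      (∑ i, (∏ j ∈ Finset.univ.erase i, M t j (σ j)) * M' i (σ i)) t := by
    intro σ
    simpa [smul_eq_mul] using HasDerivAt.fun_finsetProd (u := Finset.univ)
      (f := fun i s => M s i (σ i)) (f' := fun i => M' i (σ i)) (x := t)
      (fun i _ => h i (σ i))
  have main : HasDerivAt
      (fun s => ∑ σ : Equiv.Perm n, ((Equiv.Perm.sign σ : ℤ) : ℝ) * ∏ i, M s i (σ i))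
      (∑ σ : Equiv.Perm n, ((Equiv.Perm.sign σ : ℤ) : ℝ) *
        ∑ i, (∏ j ∈ Finset.univ.erase i, M t j (σ j)) * M' i (σ i)) t :=
    HasDerivAt.fun_sum (fun σ _ => (hσ σ).const_mul _)
  have hfun : (fun s => (M s).det)
      = fun s => ∑ σ : Equiv.Perm n, ((Equiv.Perm.sign σ : ℤ) : ℝ) * ∏ i, M s i (σ i) :=
    funext fun s => key (M s)
  rw [hfun]
  have hrow : ∀ i, ((M t).updateRow i (M' i)).det
      = ∑ σ : Equiv.Perm n, ((Equiv.Perm.sign σ : ℤ) : ℝ) *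
          ((∏ j ∈ Finset.univ.erase i, M t j (σ j)) * M' i (σ i)) := by
    intro i
    rw [key]
    refine Finset.sum_congr rfl fun σ _ => ?_
    congr 1
    have hupd : (fun j => ((M t).updateRow i (M' i)) j (σ j))
        = Function.update (fun j => M t j (σ j)) i (M' i (σ i)) := by
      funext j
      by_cases hj : j = i
      · subst hj; simp [Matrix.updateRow_apply]
      · simp [Matrix.updateRow_apply, hj, Function.update, hj]
    calc (∏ j, ((M t).updateRow i (M' i)) j (σ j))
        = ∏ j, Function.update (fun j => M t j (σ j)) i (M' i (σ i)) j := by rw [hupd]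
      _ = M' i (σ i) * ∏ j ∈ Finset.univ.erase i, M t j (σ j) := by
          rw [← Finset.sdiff_singleton_eq_erase]
          exact Finset.prod_update_of_mem (Finset.mem_univ i) _ _
      _ = (∏ j ∈ Finset.univ.erase i, M t j (σ j)) * M' i (σ i) := mul_comm _ _
  have hval : (∑ i, ((M t).updateRow i (M' i)).det)
      = ∑ σ : Equiv.Perm n, ((Equiv.Perm.sign σ : ℤ) : ℝ) *
          ∑ i, (∏ j ∈ Finset.univ.erase i, M t j (σ j)) * M' i (σ i) := by
    simp only [hrow, Finset.mul_sum]
    exact Finset.sum_comm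
  rw [hval]
  exact main

open Matrix in
theorem aux_liouville {n : Type*} [Fintype n] [DecidableEq n]
    (A M : ℝ → Matrix n n ℝ) (hA : Continuous fun t => Matrix.trace (A t))
    (hM : ∀ t, ∀ i j, HasDerivAt (fun s => M s i j) ((A t * M t) i j) t)
    (hM0 : M 0 = 1) :
    (M 1).det = Real.exp (∫ τ in (0:ℝ)..1, Matrix.trace (A τ)) := by
  have hdet : ∀ t, HasDerivAt (fun s => (M s).det)
      (Matrix.trace (A t) * (M t).det) t := by
    intro t
    have h := aux_det_hasDerivAt M (A t * M t) t (hM t)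
    have hrows : ∀ i, ((M t).updateRow i ((A t * M t) i)).det = A t i i * (M t).det := by
      intro i
      have : (A t * M t) i = ∑ k, (A t i k) • (M t) k := by
        funext j
        simp [Matrix.mul_apply, Finset.sum_apply]
      rw [this, Matrix.det_updateRow_sum, smul_eq_mul]
    have hsum : (∑ i, ((M t).updateRow i ((A t * M t) i)).det)
        = Matrix.trace (A t) * (M t).det := by
      simp only [hrows, Matrix.trace, Matrix.diag]
      rw [Finset.sum_mul]
    rwa [hsum] at h
  set c : ℝ → ℝ := fun t => Matrix.trace (A t) with hc
  have hE : ∀ t, HasDerivAt (fun u => ∫ τ in (0:ℝ)..u, c τ) (c t) t := by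
    intro t
    exact intervalIntegral.integral_hasDerivAt_right (hA.intervalIntegrable 0 t)
      (hA.stronglyMeasurableAtFilter _ _) hA.continuousAt
  set g : ℝ → ℝ := fun t => (M t).det * Real.exp (-∫ τ in (0:ℝ)..t, c τ) with hg
  have hg' : ∀ t, HasDerivAt g 0 t := by
    intro t
    have h1 := (hdet t).fun_mul (((hE t).fun_neg).exp)
    convert h1 using 1
    · rfl
    · rfl
    · ring
  have hconst : g 1 = g 0 := by
    have hdiff : Differentiable ℝ g := fun t => (hg' t).differentiableAt
    have hderiv : ∀ t, deriv g t = 0 := fun t => (hg' t).deriv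
    exact is_const_of_deriv_eq_zero hdiff hderiv 1 0
  have h0 : g 0 = 1 := by
    simp [hg, hM0]
  have h1 : (M 1).det * Real.exp (-∫ τ in (0:ℝ)..1, c τ) = 1 := by
    rw [show ((M 1).det * Real.exp (-∫ τ in (0:ℝ)..1, c τ)) = g 1 from rfl, hconst, h0]
  calc (M 1).det
      = ((M 1).det * Real.exp (-∫ τ in (0:ℝ)..1, c τ))
          * Real.exp (∫ τ in (0:ℝ)..1, c τ) := by
        rw [mul_assoc, ← Real.exp_add]; simp
    _ = Real.exp (∫ τ in (0:ℝ)..1, c τ) := by rw [h1, one_mul]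

/-!
STATEMENT 10 (variation of holonomy).  The bundle `E` restricted to the curve
`γ` is trivialized by a fixed fiber `F`; in this trivialization the connection
`∇` along `γ` is given by a (continuous) endomorphism-valued function
`a(t) = connection form of ∇ at γ(t) applied to γ'(t)`, and `α(γ'(t))` is the
endomorphism `b(t)`.  The parallel transports `P_t` of `∇` and `P̃_t` of
`∇̃ = ∇ + α` are the solutions of the linear ODEs `P' = -a P`, `P̃' = -(a+b) P̃`
with `P₀ = P̃₀ = id`.  Then
`det(P̃₁ ∘ P₁⁻¹) = det(P̃₁)/det(P₁) = exp(-∫₀¹ tr(b(τ)) dτ)`. -/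
theorem stmt10 (F : Type*) [NormedAddCommGroup F] [NormedSpace ℝ F]
    [FiniteDimensional ℝ F]
    (a b : ℝ → (F →L[ℝ] F)) (hacont : Continuous a) (hbcont : Continuous b)
    (P Pt : ℝ → (F →L[ℝ] F))
    (hP0 : P 0 = ContinuousLinearMap.id ℝ F)
    (hPt0 : Pt 0 = ContinuousLinearMap.id ℝ F)
    (hP : ∀ t : ℝ, HasDerivAt P (-((a t).comp (P t))) t)
    (hPt : ∀ t : ℝ, HasDerivAt Pt (-((a t + b t).comp (Pt t))) t) :
    LinearMap.det ((Pt 1 : F →L[ℝ] F) : F →ₗ[ℝ] F) /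
        LinearMap.det ((P 1 : F →L[ℝ] F) : F →ₗ[ℝ] F) =
      Real.exp (- ∫ τ in (0:ℝ)..1,
        LinearMap.trace ℝ F ((b τ : F →L[ℝ] F) : F →ₗ[ℝ] F)) := by
  classical
  set β := Module.Basis.ofVectorSpace ℝ F
  set ι := Module.Basis.ofVectorSpaceIndex ℝ F
  -- the linear map sending a CLM to its matrix
  set φ : (F →L[ℝ] F) →ₗ[ℝ] Matrix ι ι ℝ :=
    (LinearMap.toMatrix β β).toLinearMap ∘ₗ (ContinuousLinearMap.coeLM ℝ) with hφdef
  have hφapp : ∀ f : F →L[ℝ] F, φ f = LinearMap.toMatrix β β (f : F →ₗ[ℝ] F) := fun f => rfl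
  have hφcont : Continuous φ := φ.continuous_of_finiteDimensional
  have hφmul : ∀ f g : F →L[ℝ] F, φ (f.comp g) = φ f * φ g := by
    intro f g
    simp only [hφapp, ContinuousLinearMap.coe_comp]
    exact LinearMap.toMatrix_comp β β β _ _
  have hφdet : ∀ f : F →L[ℝ] F, ((φ f).det : ℝ) = LinearMap.det (f : F →ₗ[ℝ] F) := by
    intro f
    rw [hφapp]
    exact LinearMap.det_toMatrix β _
  have hφtr : ∀ f : F →L[ℝ] F,
      Matrix.trace (φ f) = LinearMap.trace ℝ F (f : F →ₗ[ℝ] F) := by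
    intro f
    rw [hφapp]
    exact (LinearMap.trace_eq_matrix_trace ℝ β _).symm
  -- entrywise derivatives transfer
  have hentry : ∀ (Q : ℝ → (F →L[ℝ] F)) (D : F →L[ℝ] F) (t : ℝ),
      HasDerivAt Q D t → ∀ i j, HasDerivAt (fun s => φ (Q s) i j) (φ D i j) t := by
    intro Q D t hQ i j
    let L' : (F →L[ℝ] F) →ₗ[ℝ] ℝ := (Matrix.entryLinearMap ℝ ℝ i j) ∘ₗ φ
    have hL := (LinearMap.toContinuousLinearMap L').hasFDerivAt.comp_hasDerivAt t hQ
    simp [L', Matrix.entryLinearMap] at hL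
    exact hL
  -- apply Liouville to P
  have hdetP : (φ (P 1)).det
      = Real.exp (∫ τ in (0:ℝ)..1, Matrix.trace (-(φ (a τ)))) := by
    refine aux_liouville (fun t => -(φ (a t))) (fun t => φ (P t)) ?_ ?_ ?_
    · have : Continuous fun t => -(φ (a t)) := by
        exact (hφcont.comp hacont).neg
      exact Continuous.matrix_trace this
    · intro t i j
      have h := hentry P (-((a t).comp (P t))) t (hP t) i j
      have : φ (-((a t).comp (P t))) = -(φ (a t)) * φ (P t) := by
        rw [map_neg, hφmul, neg_mul]
      rwa [this] at h
    · show φ (P 0) = 1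
      rw [hP0, hφapp]
      simp [LinearMap.toMatrix_id]
  have hdetPt : (φ (Pt 1)).det
      = Real.exp (∫ τ in (0:ℝ)..1, Matrix.trace (-(φ (a τ) + φ (b τ)))) := by
    refine aux_liouville (fun t => -(φ (a t) + φ (b t))) (fun t => φ (Pt t)) ?_ ?_ ?_
    · have : Continuous fun t => -(φ (a t) + φ (b t)) := by
        exact ((hφcont.comp hacont).add (hφcont.comp hbcont)).neg
      exact Continuous.matrix_trace this
    · intro t i j
      have h := hentry Pt (-((a t + b t).comp (Pt t))) t (hPt t) i j
      have : φ (-((a t + b t).comp (Pt t))) = -(φ (a t) + φ (b t)) * φ (Pt t) := by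
        rw [map_neg, hφmul, neg_mul, map_add]
      rwa [this] at h
    · show φ (Pt 0) = 1
      rw [hPt0, hφapp]
      simp [LinearMap.toMatrix_id]
  -- integrability
  have hta : Continuous fun τ => Matrix.trace (φ (a τ)) :=
    Continuous.matrix_trace (hφcont.comp hacont)
  have htb : Continuous fun τ => Matrix.trace (φ (b τ)) :=
    Continuous.matrix_trace (hφcont.comp hbcont)
  have hIa : IntervalIntegrable (fun τ => Matrix.trace (φ (a τ))) MeasureTheory.volume 0 1 :=
    hta.intervalIntegrable 0 1
  have hIb : IntervalIntegrable (fun τ => Matrix.trace (φ (b τ))) MeasureTheory.volume 0 1 :=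
    htb.intervalIntegrable 0 1
  have hsplit : (∫ τ in (0:ℝ)..1, Matrix.trace (-(φ (a τ) + φ (b τ))))
      = -((∫ τ in (0:ℝ)..1, Matrix.trace (φ (a τ)))
          + (∫ τ in (0:ℝ)..1, Matrix.trace (φ (b τ)))) := by
    have : (fun τ => Matrix.trace (-(φ (a τ) + φ (b τ))))
        = fun τ => -(Matrix.trace (φ (a τ)) + Matrix.trace (φ (b τ))) := by
      funext τ; simp [Matrix.trace_add]
    rw [this, intervalIntegral.integral_neg, intervalIntegral.integral_add hIa hIb]
  have hnegA : (∫ τ in (0:ℝ)..1, Matrix.trace (-(φ (a τ))))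
      = -(∫ τ in (0:ℝ)..1, Matrix.trace (φ (a τ))) := by
    have : (fun τ => Matrix.trace (-(φ (a τ)))) = fun τ => -(Matrix.trace (φ (a τ))) := by
      funext τ; simp
    rw [this, intervalIntegral.integral_neg]
  have htrb : (∫ τ in (0:ℝ)..1, Matrix.trace (φ (b τ)))
      = ∫ τ in (0:ℝ)..1, LinearMap.trace ℝ F ((b τ : F →L[ℝ] F) : F →ₗ[ℝ] F) := by
    refine intervalIntegral.integral_congr fun τ _ => ?_
    exact hφtr (b τ)
  rw [← hφdet, ← hφdet, hdetP, hdetPt, hsplit, hnegA, ← Real.exp_sub, ← htrb]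
  congr 1
  ring
end

section
/- Let H be a Banach space, (Π_t)_{|t|<δ} a differentiable family of finite-rank projectors on H with Π_t = Π + tP + o(t), and (A_t)_{|t|<δ} a C¹ family of bounded operators on H such that A_t commutes with Π_t for every t. Then the function t ↦ tr(A_t Π_t) (trace of the finite-rank operator A_t Π_t) is differentiable at t = 0 with derivative tr(Ȧ Π), where Ȧ = (d/dt)|_{t=0} A_t and Π = Π_0. -/
/-!
Write `Π = Π₀` and `V = ran Π`. For small `t` we have `‖Π_t - Π‖ < 1`, so `x ↦ Π_t x` maps `V`
isomorphically onto `ran Π_t`, and `S_t = Π Π_t Π + (1 - Π)` is invertible; the compression of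
`S_t⁻¹` to `V` inverts that of `Π_t`. Cyclicity of the trace then moves the trace over `ran Π_t`
to the fixed space `V`:
`tr_{ran Π_t}(Π_t A_t Π_t) = tr_V(Π S_t⁻¹ Π Π_t A_t Π_t)`,
a fixed continuous linear functional applied to a differentiable function of `t`.
Differentiating `Π_t² = Π_t` gives `Π P Π = 0`, so `S_t` is stationary at `t = 0` and `P`
compresses to `0` on `V`; since `A` commutes with `Π`, the only surviving term of the derivative
is `tr_V(Π Ȧ)`.
-/

open Filter Topology

theorem ContinuousLinearMap.eq_zero_of_norm_sub_lt_one {𝕜 E : Type*} [NontriviallyNormedField 𝕜]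
    [NormedAddCommGroup E] [NormedSpace 𝕜 E] {Q R : E →L[𝕜] E} (h : ‖Q - R‖ < 1) {x : E}
    (hQ : Q x = x) (hR : R x = 0) : x = 0 := by
  have hx : ‖x‖ ≤ ‖Q - R‖ * ‖x‖ := by
    simpa [hQ, hR] using (Q - R).le_opNorm x
  exact norm_le_zero_iff.mp (by nlinarith [norm_nonneg x])

theorem IsIdempotentElem.mul_mul_eq_zero_of_hasDerivAt {𝕜 R : Type*} [NontriviallyNormedField 𝕜]
    [NormedRing R] [NormedAlgebra 𝕜 R] {Q : 𝕜 → R} {P : R} {t : 𝕜}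
    (hQ : ∀ᶠ s in 𝓝 t, IsIdempotentElem (Q s)) (hP : HasDerivAt Q P t) :
    Q t * P * Q t = 0 := by
  have hPQ : P = P * Q t + Q t * P :=
    hP.unique ((hP.mul hP).congr_of_eventuallyEq (hQ.mono fun s hs => hs.symm))
  have hQt : Q t * Q t = Q t := hQ.self_of_nhds
  have : Q t * P * Q t = Q t * P * Q t + Q t * P * Q t := by
    calc Q t * P * Q t = Q t * (P * Q t + Q t * P) * Q t := by rw [← hPQ]
      _ = Q t * P * (Q t * Q t) + (Q t * Q t) * P * Q t := by noncomm_ring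
      _ = _ := by rw [hQt]
  simpa using this

theorem HasDerivAt.ringInverse_of_eq_one {𝕜 R : Type*} [NontriviallyNormedField 𝕜]
    [NormedRing R] [HasSummableGeomSeries R] [NormedAlgebra 𝕜 R] {g : 𝕜 → R} {g' : R} {t : 𝕜}
    (hg : HasDerivAt g g' t) (h1 : g t = 1) :
    HasDerivAt (fun s => Ring.inverse (g s)) (-g') t := by
  have hinv := hasFDerivAt_ringInverse (𝕜 := 𝕜) (1 : Rˣ)
  rw [Units.val_one, ← h1] at hinv
  simpa [Function.comp_def] using hinv.comp_hasDerivAt t hg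

theorem LinearMap.trace_eq_trace_comp_of_comp_eq_id {K V W : Type*} [Field K]
    [AddCommGroup V] [Module K V] [AddCommGroup W] [Module K W]
    [FiniteDimensional K V] [FiniteDimensional K W] {u : V →ₗ[K] W} {v : W →ₗ[K] V}
    {w : V →ₗ[K] V} (hv : Function.Injective v) (hw : w ∘ₗ v ∘ₗ u = LinearMap.id)
    (f : W →ₗ[K] W) : trace K W f = trace K V (w ∘ₗ v ∘ₗ f ∘ₗ u) := by
  have hwvu : ∀ x, w (v (u x)) = x := LinearMap.congr_fun hw
  have hu : Function.Injective u := fun x y hxy => by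
    rw [← hwvu x, ← hwvu y, hxy]
  have hsurj : Function.Surjective u :=
    (injective_iff_surjective_of_finrank_eq_finrank (le_antisymm
      (finrank_le_finrank_of_injective hu) (finrank_le_finrank_of_injective hv))).mp hu
  have huwv : u ∘ₗ w ∘ₗ v = LinearMap.id := by
    ext y
    obtain ⟨x, rfl⟩ := hsurj y
    simp [hwvu]
  calc trace K W f = trace K W ((u ∘ₗ w ∘ₗ v) ∘ₗ f) := by rw [huwv, id_comp]
    _ = trace K V (w ∘ₗ v ∘ₗ f ∘ₗ u) := by
      simpa only [comp_assoc] using (trace_comp_comm' u (w ∘ₗ v ∘ₗ f)).symm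

section Compression

variable {𝕜 E : Type*} [NontriviallyNormedField 𝕜] [NormedAddCommGroup E] [NormedSpace 𝕜 E]

noncomputable def compression (Q : E →L[𝕜] E) :
    (E →L[𝕜] E) →L[𝕜] (LinearMap.range (Q : E →ₗ[𝕜] E) →L[𝕜] LinearMap.range (Q : E →ₗ[𝕜] E)) :=
  ((ContinuousLinearMap.compL 𝕜 _ E _).flip (Submodule.subtypeL _)).comp
    (ContinuousLinearMap.compL 𝕜 E E _ (Q.codRestrict _ fun x => ⟨x, rfl⟩))

variable {Q : E →L[𝕜] E}

@[simp]
theorem compression_apply_coe (M : E →L[𝕜] E) (x : LinearMap.range (Q : E →ₗ[𝕜] E)) :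
    (compression Q M x : E) = Q (M x) := rfl

theorem compression_mul_compression (M N : E →L[𝕜] E) :
    compression Q M * compression Q N = compression Q (M * Q * N) := rfl

theorem IsIdempotentElem.apply_of_mem_range (hQ : IsIdempotentElem Q) {x : E}
    (hx : x ∈ LinearMap.range (Q : E →ₗ[𝕜] E)) : Q x = x := by
  obtain ⟨y, rfl⟩ := hx
  exact congr($hQ y)

theorem compression_self (hQ : IsIdempotentElem Q) : compression Q Q = 1 := by
  ext x
  simp [hQ.apply_of_mem_range x.2]

theorem compression_self_mul (hQ : IsIdempotentElem Q) (M : E →L[𝕜] E) :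
    compression Q (Q * M) = compression Q M := by
  ext x
  exact congr($hQ (M x))

theorem compression_mul_self (hQ : IsIdempotentElem Q) (M : E →L[𝕜] E) :
    compression Q (M * Q) = compression Q M := by
  ext x
  simp [hQ.apply_of_mem_range x.2]

theorem compression_eq_zero_of_mul_mul_eq_zero (hQ : IsIdempotentElem Q) {P : E →L[𝕜] E}
    (hP : Q * P * Q = 0) : compression Q P = 0 := by
  rw [← compression_self_mul hQ, ← compression_mul_self hQ, hP, map_zero]

variable {A P : E →L[𝕜] E}

theorem compression_mul_commute_eq_zero (hQ : IsIdempotentElem Q) (hA : Commute A Q)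
    (hP : compression Q P = 0) : compression Q (P * A) = 0 :=
  calc compression Q (P * A) = compression Q (P * A * Q) := (compression_mul_self hQ _).symm
    _ = compression Q P * compression Q A := by
      rw [mul_assoc, hA.eq, ← mul_assoc, compression_mul_compression]
    _ = 0 := by rw [hP, zero_mul]

theorem compression_commute_mul_eq_zero (hQ : IsIdempotentElem Q) (hA : Commute A Q)
    (hP : compression Q P = 0) : compression Q (A * P) = 0 :=
  calc compression Q (A * P) = compression Q (Q * A * P) := by
        rw [mul_assoc, compression_self_mul hQ]
    _ = compression Q A * compression Q P := by rw [← hA.eq, compression_mul_compression]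
    _ = 0 := by rw [hP, mul_zero]

theorem compression_ringInverse_mul_compression_eq_one (hQ : IsIdempotentElem Q) {R : E →L[𝕜] E}
    (hunit : IsUnit (Q * R * Q + (1 - Q))) :
    compression Q (Ring.inverse (Q * R * Q + (1 - Q))) * compression Q R = 1 := by
  set S := Q * R * Q + (1 - Q)
  have hSQ : Commute S Q := by
    change S * Q = Q * S
    simp only [S, add_mul, mul_add, sub_mul, mul_sub, one_mul, mul_one, hQ.eq, ← mul_assoc]
    rw [mul_assoc (Q * R), hQ.eq]
  have hS : compression Q S = compression Q R := by
    have h1 : compression Q 1 = compression Q Q := by rw [← compression_self_mul hQ 1, mul_one]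
    rw [map_add, map_sub, h1, sub_self, add_zero, compression_mul_self hQ,
      compression_self_mul hQ]
  obtain ⟨u, hu⟩ := hunit
  have hinvQ : Commute (Ring.inverse S) Q := by
    rw [← hu, Ring.inverse_unit]
    exact (hu ▸ hSQ).units_inv_left
  calc compression Q (Ring.inverse S) * compression Q R
      = compression Q (Ring.inverse S * Q * S) := by rw [← hS, compression_mul_compression]
    _ = compression Q Q := by
      rw [hinvQ.eq, mul_assoc, ← hu, Ring.inverse_unit, Units.inv_mul, mul_one]
    _ = 1 := compression_self hQ

theorem trace_compression_eq_trace_compression {R W : E →L[𝕜] E}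
    [FiniteDimensional 𝕜 (LinearMap.range (Q : E →ₗ[𝕜] E))]
    [FiniteDimensional 𝕜 (LinearMap.range (R : E →ₗ[𝕜] E))] (hR : IsIdempotentElem R)
    (hQR : ∀ x ∈ LinearMap.range (R : E →ₗ[𝕜] E), Q x = 0 → x = 0)
    (hW : compression Q W * compression Q R = 1) (B : E →L[𝕜] E) :
    LinearMap.trace 𝕜 _ (compression R (B * R) : LinearMap.range (R : E →ₗ[𝕜] E) →ₗ[𝕜] _) =
      LinearMap.trace 𝕜 _
        (compression Q (W * Q * (R * B * R)) : LinearMap.range (Q : E →ₗ[𝕜] E) →ₗ[𝕜] _) := by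
  let u : LinearMap.range (Q : E →ₗ[𝕜] E) →ₗ[𝕜] LinearMap.range (R : E →ₗ[𝕜] E) :=
    (R : E →ₗ[𝕜] E).restrict fun x _ => ⟨x, rfl⟩
  let v : LinearMap.range (R : E →ₗ[𝕜] E) →ₗ[𝕜] LinearMap.range (Q : E →ₗ[𝕜] E) :=
    (Q : E →ₗ[𝕜] E).restrict fun x _ => ⟨x, rfl⟩
  have hv : Function.Injective v := by
    rw [← LinearMap.ker_eq_bot, LinearMap.ker_eq_bot']
    exact fun x hx => Subtype.ext (hQR x x.2 congr(Subtype.val $hx))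
  have hw : (compression Q W).toLinearMap ∘ₗ v ∘ₗ u = LinearMap.id := by
    ext x
    exact congr(Subtype.val ($hW x))
  rw [LinearMap.trace_eq_trace_comp_of_comp_eq_id hv hw]
  refine congrArg _ (LinearMap.ext fun x => Subtype.ext ?_)
  change Q (W (Q (R (B (R (R x)))))) = Q (W (Q (R (B (R x)))))
  rw [show R (R x) = R x from congr($hR x)]

noncomputable def compressionTrace (Q : E →L[𝕜] E) [CompleteSpace 𝕜]
    [FiniteDimensional 𝕜 (LinearMap.range (Q : E →ₗ[𝕜] E))] : (E →L[𝕜] E) →L[𝕜] 𝕜 :=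
  (LinearMap.toContinuousLinearMap
    ((LinearMap.trace 𝕜 _).comp (ContinuousLinearMap.coeLM 𝕜))).comp (compression Q)

theorem compressionTrace_apply [CompleteSpace 𝕜]
    [FiniteDimensional 𝕜 (LinearMap.range (Q : E →ₗ[𝕜] E))] (M : E →L[𝕜] E) :
    compressionTrace Q M = LinearMap.trace 𝕜 _ (compression Q M).toLinearMap := rfl

theorem compression_sandwich_deriv_eq (hQ : IsIdempotentElem Q) (hA : Commute A Q)
    (hP : compression Q P = 0) (A' : E →L[𝕜] E) :
    compression Q (Q * ((P * A + Q * A') * Q + Q * A * P)) = compression Q A' := by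
  rw [compression_self_mul hQ, map_add, compression_mul_self hQ, map_add,
    compression_mul_commute_eq_zero hQ hA hP, compression_self_mul hQ, mul_assoc,
    compression_self_mul hQ, compression_commute_mul_eq_zero hQ hA hP, zero_add, add_zero]

theorem trace_compression_eq_compressionTrace [CompleteSpace 𝕜] {R : E →L[𝕜] E}
    [FiniteDimensional 𝕜 (LinearMap.range (Q : E →ₗ[𝕜] E))]
    [FiniteDimensional 𝕜 (LinearMap.range (R : E →ₗ[𝕜] E))] (hQ : IsIdempotentElem Q)
    (hR : IsIdempotentElem R) (hRQ : ‖R - Q‖ < 1) (hunit : IsUnit (Q * R * Q + (1 - Q)))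
    (B : E →L[𝕜] E) :
    LinearMap.trace 𝕜 _ (compression R (B * R) : LinearMap.range (R : E →ₗ[𝕜] E) →ₗ[𝕜] _) =
      compressionTrace Q (Ring.inverse (Q * R * Q + (1 - Q)) * Q * (R * B * R)) :=
  trace_compression_eq_trace_compression hR
    (fun _ hx => ContinuousLinearMap.eq_zero_of_norm_sub_lt_one hRQ (hR.apply_of_mem_range hx))
    (compression_ringInverse_mul_compression_eq_one hQ hunit) B

end Compression

theorem stmt12_general (H : Type*) [NormedAddCommGroup H] [NormedSpace ℝ H]
    [CompleteSpace H]
    (δ : ℝ) (hδ : 0 < δ) (Pr : ℝ → (H →L[ℝ] H))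
    (hproj : ∀ t : ℝ, |t| < δ → (Pr t).comp (Pr t) = Pr t)
    (hfin : ∀ t : ℝ, |t| < δ →
      FiniteDimensional ℝ ↥(LinearMap.range ((Pr t : H →L[ℝ] H) : H →ₗ[ℝ] H)))
    (P : H →L[ℝ] H) (hdiff : HasDerivAt Pr P 0)
    (A A' : ℝ → (H →L[ℝ] H))
    (hA : ∀ t : ℝ, |t| < δ → HasDerivAt A (A' t) t)
    (hcomm : ∀ t : ℝ, |t| < δ → (A t).comp (Pr t) = (Pr t).comp (A t)) :
    HasDerivAt
      (fun t : ℝ =>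
        LinearMap.trace ℝ ↥(LinearMap.range ((Pr t : H →L[ℝ] H) : H →ₗ[ℝ] H))
          (LinearMap.restrict
            (((Pr t).comp ((A t).comp (Pr t)) : H →L[ℝ] H) : H →ₗ[ℝ] H)
            (fun x _ => ⟨(A t) ((Pr t) x), rfl⟩)))
      (LinearMap.trace ℝ ↥(LinearMap.range ((Pr 0 : H →L[ℝ] H) : H →ₗ[ℝ] H))
        (LinearMap.restrict
          (((Pr 0).comp (A' 0) : H →L[ℝ] H) : H →ₗ[ℝ] H)
          (fun x _ => ⟨(A' 0) x, rfl⟩)))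
      0 := by
  have hδ0 : ∀ᶠ t in 𝓝 (0 : ℝ), |t| < δ := by simpa using eventually_abs_sub_lt 0 hδ
  have h0 := hδ0.self_of_nhds
  have hidem : ∀ t, |t| < δ → IsIdempotentElem (Pr t) := hproj
  have := hfin 0 h0
  set Q := Pr 0
  have hQ : IsIdempotentElem Q := hidem 0 h0
  have hQPQ : Q * P * Q = 0 :=
    IsIdempotentElem.mul_mul_eq_zero_of_hasDerivAt (hδ0.mono hidem) hdiff
  set S := fun t => Q * Pr t * Q + (1 - Q)
  have hS : HasDerivAt S 0 0 := by
    have h := ((hdiff.const_mul Q).mul_const Q).add_const (1 - Q)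
    rwa [hQPQ] at h
  have hS0 : S 0 = 1 := by
    change Q * Q * Q + (1 - Q) = 1
    rw [hQ.eq, hQ.eq, add_sub_cancel]
  have hY : HasDerivAt (fun t => Pr t * A t * Pr t)
      ((P * A 0 + Q * A' 0) * Q + Q * A 0 * P) 0 := (hdiff.mul (hA 0 h0)).mul hdiff
  have hF := ((hS.ringInverse_of_eq_one hS0).mul_const Q).mul hY
  rw [hS0, Ring.inverse_one, neg_zero, zero_mul, zero_mul, zero_add, one_mul] at hF
  have hτ := (compressionTrace Q).hasFDerivAt.comp_hasDerivAt 0 hF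
  rw [compressionTrace_apply, compression_sandwich_deriv_eq hQ (hcomm 0 h0)
    (compression_eq_zero_of_mul_mul_eq_zero hQ hQPQ)] at hτ
  refine hτ.congr_of_eventuallyEq ?_
  filter_upwards [hδ0, (tendsto_iff_norm_sub_tendsto_zero.1 hdiff.continuousAt).eventually
    (gt_mem_nhds one_pos), hS.continuousAt.eventually_mem (Units.isOpen.mem_nhds
    (hS0 ▸ isUnit_one))] with t ht hclose hunit
  have := hfin t ht
  -- the restriction in the goal is `compression (Pr t) (A t * Pr t)` up to definitional unfolding
  exact trace_compression_eq_compressionTrace hQ (hidem t ht) hclose hunit (A t)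

theorem stmt12 (H : Type*) [NormedAddCommGroup H] [NormedSpace ℝ H]
    [CompleteSpace H]
    (δ : ℝ) (hδ : 0 < δ) (Pr : ℝ → (H →L[ℝ] H))
    (hproj : ∀ t : ℝ, |t| < δ → (Pr t).comp (Pr t) = Pr t)
    (hfin : ∀ t : ℝ, |t| < δ →
      FiniteDimensional ℝ ↥(LinearMap.range ((Pr t : H →L[ℝ] H) : H →ₗ[ℝ] H)))
    (P : H →L[ℝ] H) (hdiff : HasDerivAt Pr P 0)
    (A A' : ℝ → (H →L[ℝ] H))
    (hA : ∀ t : ℝ, |t| < δ → HasDerivAt A (A' t) t)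
    (hA'cont : ContinuousOn A' (Set.Ioo (-δ) δ))
    (hcomm : ∀ t : ℝ, |t| < δ → (A t).comp (Pr t) = (Pr t).comp (A t)) :
    HasDerivAt
      (fun t : ℝ =>
        LinearMap.trace ℝ ↥(LinearMap.range ((Pr t : H →L[ℝ] H) : H →ₗ[ℝ] H))
          (LinearMap.restrict
            (((Pr t).comp ((A t).comp (Pr t)) : H →L[ℝ] H) : H →ₗ[ℝ] H)
            (fun x _ => ⟨(A t) ((Pr t) x), rfl⟩)))
      (LinearMap.trace ℝ ↥(LinearMap.range ((Pr 0 : H →L[ℝ] H) : H →ₗ[ℝ] H))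
        (LinearMap.restrict
          (((Pr 0).comp (A' 0) : H →L[ℝ] H) : H →ₗ[ℝ] H)
          (fun x _ => ⟨(A' 0) x, rfl⟩)))
      0 :=
  stmt12_general H δ hδ Pr hproj hfin P hdiff A A' hA hcomm
end

section
/- Let (C^•, ∂) be a finite-dimensional acyclic cochain complex of odd length n = 2r+1 over ℂ, equipped with a chirality operator Γ (Γ² = id, Γ(C^k) = C^{n−k}) such that the map Γ∘∂ restricts to an isomorphism C^k_+ → C^{n−k−1}_+ for all 0 ≤ k ≤ r−1, where C^k_+ = C^k ∩ ker(∂∘Γ). Assume additionally that dim C^k_+ = dim ker(∂|_{C^{n-k}}) for each k (which holds when the signature operator B = Γ∂ + ∂Γ is invertible, since then Γ maps C^k_+ isomorphically onto C^{n−k}_− = C^{n−k} ∩ ker(Γ∂) = ker(∂)∩C^{n−k}). Then for every 0 ≤ k ≤ r−1, dim C^k_+ + dim C^{k+1}_+ = dim C^{k+1}. -/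
/-!
Acyclicity identifies the cycles of `C^{j+1}` with `d(C^j)`, since a homogeneous cycle is the
image of the degree-`j` component of any preimage. Hence the two hypotheses on `dim C^k_+` and
`dim C^{k+1}_+` become `dim d(C^{n-k-1}) + dim (C^{n-k-1} ∩ ker d)`, which is `dim C^{n-k-1}` by
rank–nullity, and `Γ` matches `C^{n-k-1}` with `C^{k+1}` in dimension.
-/

open Module

theorem Submodule.finrank_map_add_finrank_inf_ker {K V W : Type*} [DivisionRing K]
    [AddCommGroup V] [Module K V] [FiniteDimensional K V] [AddCommGroup W] [Module K W]
    (f : V →ₗ[K] W) (p : Submodule K V) :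
    finrank K (p.map f) + finrank K ↥(p ⊓ LinearMap.ker f) = finrank K p := by
  have h := (f.domRestrict p).finrank_range_add_finrank_ker
  rw [LinearMap.range_domRestrict, LinearMap.ker_domRestrict] at h
  rwa [← (comapSubtypeEquivOfLe inf_le_left).finrank_eq, comap_inf, comap_subtype_self,
    top_inf_eq]

namespace DirectSum

variable {ι R M : Type*} [DecidableEq ι] [AddRightCancelSemigroup ι] [Semiring R]
  [AddCommMonoid M] [Module R M] {C : ι → Submodule R M} {f : M →ₗ[R] M} {e : ι}

theorem coe_decompose_map_of_mapsTo_add [Decomposition C] (hf : ∀ i, ∀ x ∈ C i, f x ∈ C (i + e))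
    (x : M) (i : ι) : (decompose C (f x) (i + e) : M) = f (decompose C x i) := by
  induction x using Decomposition.inductionOn C with
  | zero => simp
  | @homogeneous j y =>
    by_cases hji : j = i
    · subst hji
      rw [decompose_of_mem_same C (hf j y y.2), decompose_of_mem_same C y.2]
    · rw [decompose_of_mem_ne C (hf j y y.2) (by simpa using hji),
        decompose_of_mem_ne C y.2 hji, map_zero]
  | add x y hx hy => simp only [map_add, decompose_add, add_apply, Submodule.coe_add, hx, hy]

theorem IsInternal.inf_range_eq_map_of_mapsTo_add (hC : IsInternal C)
    (hf : ∀ i, ∀ x ∈ C i, f x ∈ C (i + e)) (i : ι) :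
    C (i + e) ⊓ LinearMap.range f = (C i).map f := by
  let := hC.chooseDecomposition
  refine le_antisymm ?_ (le_inf (Submodule.map_le_iff_le_comap.mpr (hf i)) LinearMap.map_le_range)
  rintro _ ⟨hx, y, rfl⟩
  rw [← decompose_of_mem_same C hx, coe_decompose_map_of_mapsTo_add hf]
  exact Submodule.mem_map_of_mem (decompose C y i).2

end DirectSum

theorem Submodule.finrank_eq_of_map_eq_involutive {ι K V : Type*} [DivisionRing K]
    [AddCommGroup V] [Module K V] [FiniteDimensional K V] {C : ι → Submodule K V} {σ : ι → ι}
    (hσ : Function.Involutive σ) (Γ : V →ₗ[K] V) (hΓ : ∀ k, (C k).map Γ = C (σ k)) (k : ι) :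
    finrank K (C k) = finrank K (C (σ k)) := by
  refine le_antisymm ?_ (hΓ k ▸ finrank_map_le Γ (C k))
  have h := finrank_map_le Γ (C (σ k))
  rwa [hΓ, hσ] at h

theorem stmt14_general (V : Type*) [AddCommGroup V] [Module ℂ V] [FiniteDimensional ℂ V]
    (r : ℕ) (n : ℤ)
    (C : ℤ → Submodule ℂ V) (hinternal : DirectSum.IsInternal C)
    (d : V →ₗ[ℂ] V)
    (hdgrade : ∀ k : ℤ, ∀ x ∈ C k, d x ∈ C (k + 1))
    (hacyclic : LinearMap.ker d = LinearMap.range d)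
    (Γ : V →ₗ[ℂ] V)
    (hΓgrade : ∀ k : ℤ, Submodule.map Γ (C k) = C (n - k))
    (Cp : ℤ → Submodule ℂ V)
    (hdim : ∀ k : ℤ, 0 ≤ k → k ≤ (r : ℤ) →
      Module.finrank ℂ ↥(Cp k) =
        Module.finrank ℂ ↥(C (n - k) ⊓ LinearMap.ker d)) :
    ∀ k : ℤ, 0 ≤ k → k ≤ (r : ℤ) - 1 →
      Module.finrank ℂ ↥(Cp k) + Module.finrank ℂ ↥(Cp (k + 1)) =
        Module.finrank ℂ ↥(C (k + 1)) := by
  intro k hk0 hk1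
  have hcycles (j : ℤ) : C (j + 1) ⊓ LinearMap.ker d = (C j).map d :=
    hacyclic ▸ hinternal.inf_range_eq_map_of_mapsTo_add hdgrade j
  calc finrank ℂ (Cp k) + finrank ℂ (Cp (k + 1))
      = finrank ℂ ((C (n - k - 1)).map d) + finrank ℂ ↥(C (n - k - 1) ⊓ LinearMap.ker d) := by
        rw [hdim k hk0 (by omega), hdim (k + 1) (by omega) (by omega), ← hcycles, sub_add_cancel,
          sub_add_eq_sub_sub]
    _ = finrank ℂ (C (n - k - 1)) := Submodule.finrank_map_add_finrank_inf_ker d _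
    _ = finrank ℂ (C (k + 1)) := by
      rw [Submodule.finrank_eq_of_map_eq_involutive (sub_sub_cancel n) Γ hΓgrade, sub_sub,
        sub_sub_cancel]

theorem stmt14 (V : Type*) [AddCommGroup V] [Module ℂ V] [FiniteDimensional ℂ V]
    (r : ℕ) (n : ℤ) (hn : n = 2 * (r : ℤ) + 1)
    (C : ℤ → Submodule ℂ V) (hinternal : DirectSum.IsInternal C)
    (hbound : ∀ k : ℤ, (k < 0 ∨ n < k) → C k = ⊥)
    (d : V →ₗ[ℂ] V)
    (hdgrade : ∀ k : ℤ, ∀ x ∈ C k, d x ∈ C (k + 1))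
    (hdd : d ∘ₗ d = 0)
    (hacyclic : LinearMap.ker d = LinearMap.range d)
    (Γ : V →ₗ[ℂ] V) (hΓ2 : Γ ∘ₗ Γ = LinearMap.id)
    (hΓgrade : ∀ k : ℤ, Submodule.map Γ (C k) = C (n - k))
    (Cp : ℤ → Submodule ℂ V)
    (hCp : ∀ k : ℤ, Cp k = C k ⊓ LinearMap.ker (d ∘ₗ Γ))
    (hiso : ∀ k : ℤ, 0 ≤ k → k ≤ (r : ℤ) - 1 →
      Submodule.map (Γ ∘ₗ d) (Cp k) = Cp (n - k - 1) ∧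
        ∀ x ∈ Cp k, (Γ ∘ₗ d) x = 0 → x = 0)
    (hdim : ∀ k : ℤ, 0 ≤ k → k ≤ (r : ℤ) →
      Module.finrank ℂ ↥(Cp k) =
        Module.finrank ℂ ↥(C (n - k) ⊓ LinearMap.ker d)) :
    ∀ k : ℤ, 0 ≤ k → k ≤ (r : ℤ) - 1 →
      Module.finrank ℂ ↥(Cp k) + Module.finrank ℂ ↥(Cp (k + 1)) =
        Module.finrank ℂ ↥(C (k + 1)) :=
  stmt14_general V r n C hinternal d hdgrade hacyclic Γ hΓgrade Cp hdim
end

section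
/- Let (C^•, ∂) be a finite-dimensional acyclic cochain complex over ℂ of length n, and let k : C^• → C^{•−1} be a cochain contraction (∂k + k∂ = id). Let a : C^• → C^{•+1} satisfy ∂a + a∂ = 0, and suppose ∂(z) = ∂ + z·a is a differential (∂(z)² = 0) which is acyclic for all z in a neighborhood of 0 ∈ ℂ. Fix bases of each C^j adapted to a decomposition C^j = B^j ⊕ A^j with B^j = ker ∂ ∩ C^j, giving distinguished elements c_j ∈ det C^j and c = c_0 ⊗ c_1^{−1} ⊗ … ⊗ c_n^{(−1)^n} ∈ det C^•. Then the torsion τ(C^•(z), c) of the complex (C^•, ∂(z)) with respect to c is complex differentiable at z = 0 and its logarithmic derivative is (d/dz)|_{z=0} log τ(C^•(z), c) = −str(a∘k), where str is the super trace. -/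
set_option maxHeartbeats 1000000
set_option synthInstance.maxHeartbeats 400000


open ExteriorAlgebra in
/-- A linear functional on the exterior algebra extracting the determinant of a
pair of appended families, relative to a basis indexed by `Fin p ⊕ Fin q`. -/
lemma stmt16_aux_pair {V : Type*} [AddCommGroup V] [Module ℂ V] {p q : ℕ}
    (b : Module.Basis (Fin p ⊕ Fin q) ℂ V) :
    ∃ Φ : ExteriorAlgebra ℂ V →ₗ[ℂ] ℂ, ∀ (f : Fin p → V) (g : Fin q → V),
      Φ (ιMulti ℂ p f * ιMulti ℂ q g) = b.det (Sum.elim f g) := by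
  refine ⟨liftAlternating (fun i =>
    if h : i = p + q then ((b.det.domDomCongr finSumFinEquiv).domDomCongr (finCongr h).symm)
    else 0), fun f g => ?_⟩
  have hmul : ιMulti ℂ p f * ιMulti ℂ q g = ιMulti ℂ (p + q) (Fin.append f g) := by
    rw [ιMulti_apply, ιMulti_apply, ιMulti_apply, ← List.prod_append, ← List.ofFn_fin_append]
    have : (Fin.append (fun i => ι ℂ (f i)) fun i => ι ℂ (g i)) =
        fun i => ι ℂ (Fin.append f g i) := by
      funext i
      refine Fin.addCases (fun i => ?_) (fun i => ?_) i <;>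
        simp [Fin.append_left, Fin.append_right]
    rw [this]
  rw [hmul, liftAlternating_apply_ιMulti, dif_pos rfl]
  simp only [finCongr_refl, Equiv.refl_symm, AlternatingMap.domDomCongr_refl]
  rw [AlternatingMap.domDomCongr_apply]
  congr 1
  funext s
  cases s <;> simp [Fin.append_left, Fin.append_right]

open ExteriorAlgebra in
lemma stmt16_aux_single {V : Type*} [AddCommGroup V] [Module ℂ V] {p : ℕ}
    (b : Module.Basis (Fin p) ℂ V) :
    ∃ Φ : ExteriorAlgebra ℂ V →ₗ[ℂ] ℂ, ∀ (f : Fin p → V),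
      Φ (ιMulti ℂ p f) = b.det f := by
  refine ⟨liftAlternating (fun i =>
    if h : i = p then (b.det.domDomCongr (finCongr h).symm) else 0), fun f => ?_⟩
  rw [liftAlternating_apply_ιMulti, dif_pos rfl]
  simp

/-- Derivative at `0` of `z ↦ det_b (b + z • w)`. -/
lemma stmt16_aux_det {ι : Type*} [Fintype ι] [DecidableEq ι] {V : Type*}
    [AddCommGroup V] [Module ℂ V] (b : Module.Basis ι ℂ V) (w : ι → V) :
    HasDerivAt (fun z : ℂ => b.det (fun s => b s + z • w s))
      (∑ s, b.repr (w s) s) 0 := by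
  classical
  set N : Matrix ι ι ℂ := Matrix.of (fun s t => b.repr (w t) s) with hN
  have hfun : (fun z : ℂ => b.det (fun s => b s + z • w s)) =
      fun z : ℂ => 1 + Matrix.trace N * z +
        (Matrix.det (1 + (Polynomial.X : Polynomial ℂ) • N.map Polynomial.C)).divX.divX.eval z
          * z ^ 2 := by
    funext z
    rw [Module.Basis.det_apply, show b.toMatrix (fun t => b t + z • w t) = 1 + z • N by
      ext s t
      simp [Module.Basis.toMatrix_apply, hN, Matrix.one_apply, Finsupp.single_apply, eq_comm,
        Matrix.add_apply]]
    rw [Matrix.det_one_add_smul]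
  rw [hfun]
  have h1 : HasDerivAt (fun z : ℂ => 1 + Matrix.trace N * z) (Matrix.trace N) 0 := by
    simpa using ((hasDerivAt_id (0:ℂ)).const_mul (Matrix.trace N)).const_add 1
  have h2 : HasDerivAt (fun z : ℂ =>
      (Matrix.det (1 + (Polynomial.X : Polynomial ℂ) • N.map Polynomial.C)).divX.divX.eval z
        * z ^ 2) 0 0 := by
    have := (Polynomial.hasDerivAt
      (Matrix.det (1 + (Polynomial.X : Polynomial ℂ) • N.map Polynomial.C)).divX.divX (0:ℂ)).mul
      ((hasDerivAt_pow 2 (0:ℂ)))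
    simpa [Pi.mul_def] using this
  have h3 := h1.add h2
  simp only [add_zero] at h3
  have htr : Matrix.trace N = ∑ s, b.repr (w s) s := by
    simp [Matrix.trace, Matrix.diag, hN]
  rw [← htr]
  exact h3

/-- Alternating telescoping sum. -/
lemma stmt16_aux_tel (n : ℕ) (α : ℕ → ℂ) (h0 : α 0 = 0) (hn : α n = 0) :
    ∑ j ∈ Finset.range n, (-1 : ℂ) ^ (j + 1) * (α j + α (j + 1)) = 0 := by
  have : ∀ j, (-1 : ℂ) ^ (j + 1) * (α j + α (j + 1)) =
      (fun m => (-1 : ℂ) ^ (m + 1) * α m) j - (fun m => (-1 : ℂ) ^ (m + 1) * α m) (j + 1) := by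
    intro j
    simp only [pow_succ]
    ring
  rw [Finset.sum_congr rfl (fun j _ => this j), Finset.sum_range_sub']
  simp [h0, hn]

lemma stmt16_aux_zpow (x y Δ : ℂ) (m : ℤ) (h : x * Δ = y) (hy : y ≠ 0) :
    x ^ m = y ^ m * Δ ^ (-m) := by
  have hΔ : Δ ≠ 0 := by rintro rfl; simp at h; exact hy h.symm
  have hx : x = y * Δ⁻¹ := by rw [← h, mul_inv_cancel_right₀ hΔ]
  rw [hx, mul_zpow, inv_zpow, zpow_neg]

/-!
STATEMENT 16 (variation of the torsion under an analytic family of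
differentials; Lemma 5.1).  `(C^•, d)` is a finite-dimensional acyclic
complex over `ℂ` of length `n`, `k` a cochain contraction (`∂k + k∂ = id`),
`a` a degree `+1` map with `∂a + a∂ = 0`, and `∂(z) = d + z•a` is a
differential which is acyclic for all `|z| < ε`.  Fixing decompositions
`C^j = (ker d ∩ C^j) ⊕ A^j`, bases `v j` of the `A^j` and nonzero elements
`c_j` of the determinant lines `det C^j = Λ^{dim C^j} C^j`, the torsion of
`(C^•, ∂(z))` with respect to `c` is `τ(z) = ∏_j λ_j(z)^{(-1)^j}` (up to a
fixed sign), where `λ_j(z)` is defined by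
`c_j = λ_j(z) · (∂(z)v_{j-1}^1 ∧ … ∧ ∂(z)v_{j-1}^{ℓ_{j-1}} ∧ v_j^1 ∧ … )`.
Then `z ↦ τ(z)` is complex differentiable at `0` with
`τ'(0) = -str(a∘k) · τ(0)`, i.e. `(d/dz)|₀ log τ = -str(a∘k)`, where
`str(a∘k) = Σ_{j} (-1)^{j+1} tr(a_j ∘ k_j)`. -/
theorem stmt16 (n : ℕ) (C : ℕ → Type*)
    [∀ j, AddCommGroup (C j)] [∀ j, Module ℂ (C j)]
    [∀ j, FiniteDimensional ℂ (C j)]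
    (htop : ∀ j, n < j → ∀ x : C j, x = 0)
    (d : ∀ j, C j →ₗ[ℂ] C (j + 1))
    (hdd : ∀ j, (d (j + 1)) ∘ₗ (d j) = 0)
    (h0 : LinearMap.ker (d 0) = ⊥)
    (hexact : ∀ j, LinearMap.ker (d (j + 1)) = LinearMap.range (d j))
    (a : ∀ j, C j →ₗ[ℂ] C (j + 1))
    (hanti : ∀ j, (d (j + 1)) ∘ₗ (a j) + (a (j + 1)) ∘ₗ (d j) = 0)
    (ε : ℝ) (hε : 0 < ε)
    (hzacyclic : ∀ z : ℂ, ‖z‖ < ε →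
      (LinearMap.ker (d 0 + z • a 0) = ⊥) ∧
        ∀ j, LinearMap.ker (d (j + 1) + z • a (j + 1)) =
          LinearMap.range (d j + z • a j))
    (k : ∀ j, C (j + 1) →ₗ[ℂ] C j)
    (hk0 : (k 0) ∘ₗ (d 0) = LinearMap.id)
    (hk : ∀ j, (d j) ∘ₗ (k j) + (k (j + 1)) ∘ₗ (d (j + 1)) = LinearMap.id)
    (A : ∀ j, Submodule ℂ (C j))
    (hcompl : ∀ j, IsCompl (LinearMap.ker (d j)) (A j))
    (c : ∀ j, ExteriorAlgebra ℂ (C j))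
    (hctop : ∀ j, j ≤ n → c j ∈ ⋀[ℂ]^(Module.finrank ℂ (C j)) (C j))
    (hc0 : ∀ j, j ≤ n → c j ≠ 0)
    (v : ∀ j, Module.Basis (Fin (Module.finrank ℂ ↥(A j))) ℂ ↥(A j))
    (lam : ℂ → ℕ → ℂ)
    (hlam0 : ∀ z : ℂ, ‖z‖ < ε → c 0 = lam z 0 •
      ExteriorAlgebra.ιMulti ℂ (Module.finrank ℂ ↥(A 0))
        (fun i => ((v 0 i : C 0))))
    (hlam : ∀ z : ℂ, ‖z‖ < ε → ∀ j, j + 1 ≤ n → c (j + 1) = lam z (j + 1) •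
      (ExteriorAlgebra.ιMulti ℂ (Module.finrank ℂ ↥(A j))
          (fun i => (d j + z • a j) ((v j i : C j))) *
        ExteriorAlgebra.ιMulti ℂ (Module.finrank ℂ ↥(A (j + 1)))
          (fun i => ((v (j + 1) i : C (j + 1)))))) :
    HasDerivAt
      (fun z : ℂ => ∏ j ∈ Finset.range (n + 1), (lam z j) ^ ((-1 : ℤ) ^ j))
      (-(∑ j ∈ Finset.range n,
            (-1 : ℂ) ^ (j + 1) *
              LinearMap.trace ℂ (C (j + 1)) ((a j) ∘ₗ (k j))) *
        ∏ j ∈ Finset.range (n + 1), (lam 0 j) ^ ((-1 : ℤ) ^ j))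
      0 := by
  classical
  -- `A 0` is all of `C 0`
  have hA0 : A 0 = ⊤ := by
    have h := hcompl 0
    rw [h0] at h
    have := h.sup_eq_top
    rwa [bot_sup_eq] at this
  -- a basis of `C 0` given by `v 0`
  obtain ⟨b0, hb0⟩ : ∃ b0 : Module.Basis (Fin (Module.finrank ℂ ↥(A 0))) ℂ (C 0),
      ∀ i, b0 i = ((v 0 i : C 0)) := by
    refine ⟨(v 0).map (LinearEquiv.ofTop (A 0) hA0), fun i => ?_⟩
    simp [Module.Basis.map_apply]
  -- bases of `C (j+1)` adapted to the decomposition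
  obtain ⟨bb, hbbl, hbbr⟩ : ∃ bb : ∀ j, Module.Basis
      (Fin (Module.finrank ℂ ↥(A j)) ⊕ Fin (Module.finrank ℂ ↥(A (j + 1)))) ℂ (C (j + 1)),
      (∀ j i, bb j (Sum.inl i) = d j ((v j i : C j))) ∧
        (∀ j i, bb j (Sum.inr i) = ((v (j + 1) i : C (j + 1)))) := by
    have key : ∀ j, ∃ e : (↥(A j) × ↥(A (j + 1))) ≃ₗ[ℂ] C (j + 1),
        ∀ (x : ↥(A j)) (y : ↥(A (j + 1))), e (x, y) = d j x + y := by
      intro j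
      set L : (↥(A j) × ↥(A (j + 1))) →ₗ[ℂ] C (j + 1) :=
        ((d j).comp (A j).subtype).coprod ((A (j + 1)).subtype) with hL
      have hLapp : ∀ (x : ↥(A j)) (y : ↥(A (j + 1))), L (x, y) = d j x + y := by
        intro x y; simp [hL]
      have hinj : Function.Injective L := by
        rw [← LinearMap.ker_eq_bot, Submodule.eq_bot_iff]
        rintro ⟨x, y⟩ hmem
        have hz : d j (x : C j) + (y : C (j + 1)) = 0 := by
          have hm : L (x, y) = 0 := hmem
          rwa [hLapp] at hm
        have hu1 : d j (x : C j) ∈ LinearMap.ker (d (j + 1)) := by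
          have := LinearMap.ext_iff.1 (hdd j) (x : C j)
          simpa [LinearMap.mem_ker] using this
        have hu2 : d j (x : C j) ∈ A (j + 1) := by
          have hxy : d j (x : C j) = -(y : C (j + 1)) := eq_neg_of_add_eq_zero_left hz
          rw [hxy]
          exact neg_mem y.2
        have hu0 : d j (x : C j) = 0 :=
          Submodule.disjoint_def.1 (hcompl (j + 1)).disjoint _ hu1 hu2
        have hy0 : (y : C (j + 1)) = 0 := by
          rw [hu0] at hz; simpa using hz
        have hx0 : (x : C j) = 0 := by
          have hker : (x : C j) ∈ LinearMap.ker (d j) := by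
            simp [LinearMap.mem_ker, hu0]
          exact Submodule.disjoint_def.1 (hcompl j).disjoint _ hker x.2
        have h1 : x = 0 := Subtype.ext (by simp [hx0])
        have h2 : y = 0 := Subtype.ext (by simp [hy0])
        simp [h1, h2, Prod.ext_iff]
      have hsurj : Function.Surjective L := by
        intro w
        have hw : w ∈ LinearMap.ker (d (j + 1)) ⊔ A (j + 1) := by
          rw [(hcompl (j + 1)).sup_eq_top]; trivial
        obtain ⟨u, hu, y, hy, rfl⟩ := Submodule.mem_sup.1 hw
        rw [hexact j] at hu
        obtain ⟨x', rfl⟩ := hu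
        have hx' : x' ∈ LinearMap.ker (d j) ⊔ A j := by
          rw [(hcompl j).sup_eq_top]; trivial
        obtain ⟨x1, hx1, x2, hx2, rfl⟩ := Submodule.mem_sup.1 hx'
        refine ⟨(⟨x2, hx2⟩, ⟨y, hy⟩), ?_⟩
        rw [hLapp]
        have : d j x1 = 0 := hx1
        simp [map_add, this]
      refine ⟨LinearEquiv.ofBijective L ⟨hinj, hsurj⟩, fun x y => ?_⟩
      rw [← hLapp]; rfl
    choose e he using key
    refine ⟨fun j => ((v j).prod (v (j + 1))).map (e j), fun j i => ?_, fun j i => ?_⟩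
    · rw [Module.Basis.map_apply, Module.Basis.prod_apply]
      simpa using he j (v j i) 0
    · rw [Module.Basis.map_apply, Module.Basis.prod_apply]
      simpa using he j 0 (v (j + 1) i)
  -- the standard contraction associated with the bases
  obtain ⟨kt, hktl, hktr⟩ : ∃ kt : ∀ j, C (j + 1) →ₗ[ℂ] C j,
      (∀ j i, kt j (d j ((v j i : C j))) = (v j i : C j)) ∧
        (∀ j i, kt j ((v (j + 1) i : C (j + 1))) = 0) := by
    refine ⟨fun j => (bb j).constr ℂ
      (Sum.elim (fun i => ((v j i : C j))) (fun _ => 0)), fun j i => ?_, fun j i => ?_⟩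
    · rw [← hbbl j i, Module.Basis.constr_basis]
      rfl
    · rw [← hbbr j i, Module.Basis.constr_basis]
      rfl
  have hdd' : ∀ j (x : C j), d (j + 1) (d j x) = 0 := by
    intro j x
    have := LinearMap.ext_iff.1 (hdd j) x
    simpa using this
  have hkt0 : kt 0 ∘ₗ d 0 = LinearMap.id := by
    apply b0.ext
    intro i
    rw [LinearMap.comp_apply, hb0, hktl 0 i, LinearMap.id_apply]
  have hktc : ∀ j, d j ∘ₗ kt j + kt (j + 1) ∘ₗ d (j + 1) = LinearMap.id := by
    intro j
    apply (bb j).ext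
    intro s
    cases s with
    | inl i =>
      rw [hbbl]
      simp only [LinearMap.add_apply, LinearMap.comp_apply, LinearMap.id_apply]
      rw [hktl j i, hdd' j, map_zero, add_zero]
    | inr i =>
      rw [hbbr]
      simp only [LinearMap.add_apply, LinearMap.comp_apply, LinearMap.id_apply]
      rw [hktr j i, map_zero, hktl (j + 1) i, zero_add]
  -- the diagonal sums
  set Tf : ℕ → ℂ := fun j => ∑ i, (bb j).repr (a j ((v j i : C j))) (Sum.inl i) with hTf
  have htrkt : ∀ j, LinearMap.trace ℂ (C (j + 1)) (a j ∘ₗ kt j) = Tf j := by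
    intro j
    rw [LinearMap.trace_eq_matrix_trace ℂ (bb j), Matrix.trace, hTf]
    rw [Fintype.sum_sum_type]
    have h1 : ∀ i, Matrix.diag (LinearMap.toMatrix (bb j) (bb j) (a j ∘ₗ kt j)) (Sum.inl i)
        = (bb j).repr (a j ((v j i : C j))) (Sum.inl i) := by
      intro i
      rw [Matrix.diag_apply, LinearMap.toMatrix_apply, LinearMap.comp_apply, hbbl, hktl j i]
    have h2 : ∀ i, Matrix.diag (LinearMap.toMatrix (bb j) (bb j) (a j ∘ₗ kt j)) (Sum.inr i)
        = 0 := by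
      intro i
      rw [Matrix.diag_apply, LinearMap.toMatrix_apply, LinearMap.comp_apply, hbbr, hktr j i,
        map_zero, map_zero]
      rfl
    rw [Finset.sum_congr rfl (fun i _ => h1 i), Finset.sum_congr rfl (fun i _ => h2 i)]
    simp
  -- Part B: the supertrace of `a ∘ k` equals that of `a ∘ kt`
  have traceid : ∑ j ∈ Finset.range n,
      (-1 : ℂ) ^ (j + 1) * LinearMap.trace ℂ (C (j + 1)) (a j ∘ₗ k j)
      = ∑ j ∈ Finset.range n, (-1 : ℂ) ^ (j + 1) * Tf j := by
    set αf : ℕ → ℂ := fun j => LinearMap.trace ℂ (C (j + 1))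
      ((a j ∘ₗ (k j - kt j)) ∘ₗ (d j ∘ₗ k j)) with hαf
    have hα0 : αf 0 = 0 := by
      have hz : (a 0 ∘ₗ (k 0 - kt 0)) ∘ₗ (d 0 ∘ₗ k 0) = 0 := by
        apply LinearMap.ext
        intro x
        simp only [LinearMap.comp_apply, LinearMap.sub_apply, LinearMap.zero_apply]
        have e1 := LinearMap.ext_iff.1 hk0 (k 0 x)
        have e2 := LinearMap.ext_iff.1 hkt0 (k 0 x)
        simp only [LinearMap.comp_apply, LinearMap.id_apply] at e1 e2
        rw [e1, e2, sub_self, map_zero]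
      rw [hαf]; simp only []; rw [hz, map_zero]
    have hαn : αf n = 0 := by
      have hz : (a n ∘ₗ (k n - kt n)) ∘ₗ (d n ∘ₗ k n) = 0 := by
        apply LinearMap.ext
        intro x
        exact htop (n + 1) (Nat.lt_succ_self n) _
      rw [hαf]; simp only []; rw [hz, map_zero]
    have hdh : ∀ j, d j ∘ₗ (k j - kt j) + (k (j + 1) - kt (j + 1)) ∘ₗ d (j + 1) = 0 := by
      intro j
      rw [LinearMap.comp_sub, LinearMap.sub_comp, sub_add_sub_comm, hk j, hktc j, sub_self]
    have hchain : ∀ j, d (j + 1) ∘ₗ (a j ∘ₗ (k j - kt j))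
        = (a (j + 1) ∘ₗ (k (j + 1) - kt (j + 1))) ∘ₗ d (j + 1) := by
      intro j
      apply LinearMap.ext
      intro x
      have h1 := LinearMap.ext_iff.1 (hanti j) ((k j - kt j) x)
      simp only [LinearMap.add_apply, LinearMap.comp_apply, LinearMap.zero_apply] at h1
      have h2 := LinearMap.ext_iff.1 (hdh j) x
      simp only [LinearMap.add_apply, LinearMap.comp_apply, LinearMap.zero_apply] at h2
      have h2' : d j ((k j - kt j) x) = -((k (j + 1) - kt (j + 1)) (d (j + 1) x)) :=
        eq_neg_of_add_eq_zero_left h2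
      rw [h2', map_neg] at h1
      simp only [LinearMap.comp_apply]
      exact add_neg_eq_zero.1 h1
    have htrg : ∀ j, LinearMap.trace ℂ (C (j + 1)) (a j ∘ₗ (k j - kt j)) = αf j + αf (j + 1) := by
      intro j
      have hsplit : a j ∘ₗ (k j - kt j)
          = (a j ∘ₗ (k j - kt j)) ∘ₗ (d j ∘ₗ k j)
            + (a j ∘ₗ (k j - kt j)) ∘ₗ (k (j + 1) ∘ₗ d (j + 1)) := by
        have hid : (a j ∘ₗ (k j - kt j)) ∘ₗ LinearMap.id = a j ∘ₗ (k j - kt j) :=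
          LinearMap.comp_id _
        conv_lhs => rw [← hid, ← hk j]
        rw [LinearMap.comp_add]
      rw [hsplit, map_add]
      congr 1
      rw [← LinearMap.comp_assoc]
      rw [LinearMap.trace_comp_comm']
      rw [← LinearMap.comp_assoc, hchain j, LinearMap.comp_assoc]
    have hsum0 : ∑ j ∈ Finset.range n,
        (-1 : ℂ) ^ (j + 1) * LinearMap.trace ℂ (C (j + 1)) (a j ∘ₗ (k j - kt j)) = 0 := by
      rw [Finset.sum_congr rfl (fun j _ => by rw [htrg j])]
      exact stmt16_aux_tel n αf hα0 hαn
    have hdecomp : ∀ j, LinearMap.trace ℂ (C (j + 1)) (a j ∘ₗ k j)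
        = LinearMap.trace ℂ (C (j + 1)) (a j ∘ₗ (k j - kt j)) + Tf j := by
      intro j
      rw [← htrkt j, ← map_add, ← LinearMap.comp_add, sub_add_cancel]
    rw [Finset.sum_congr rfl (fun j _ => by rw [hdecomp j, mul_add])]
    rw [Finset.sum_add_distrib, hsum0, zero_add]
  -- Part A : analytic part
  set w : ∀ j, (Fin (Module.finrank ℂ ↥(A j)) ⊕ Fin (Module.finrank ℂ ↥(A (j + 1))))
      → C (j + 1) :=
    fun j => Sum.elim (fun i => a j ((v j i : C j))) (fun _ => 0) with hw
  set δf : ℕ → ℂ → ℂ := fun j z => (bb j).det (fun s => bb j s + z • w j s) with hδf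
  have hδder : ∀ j, HasDerivAt (δf j) (Tf j) 0 := by
    intro j
    have h := stmt16_aux_det (bb j) (w j)
    have hs : ∑ s, (bb j).repr (w j s) s = Tf j := by
      rw [Fintype.sum_sum_type, hTf]
      simp [hw]
    rwa [hs] at h
  have hδ0 : ∀ j, δf j 0 = 1 := by
    intro j
    rw [hδf]
    simp only []
    have : (fun s => bb j s + (0 : ℂ) • w j s) = ⇑(bb j) := by
      funext s; simp
    rw [this, Module.Basis.det_self]
  have hε0 : ‖(0 : ℂ)‖ < ε := by simpa using hε
  -- the key scalar identity
  have hkey : ∀ z : ℂ, ‖z‖ < ε → ∀ j, j + 1 ≤ n →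
      lam z (j + 1) * δf j z = lam 0 (j + 1) := by
    intro z hz j hj
    obtain ⟨Φ, hΦ⟩ := stmt16_aux_pair (bb j)
    have helim : ∀ z' : ℂ, Sum.elim (fun i => (d j + z' • a j) ((v j i : C j)))
        (fun i => ((v (j + 1) i : C (j + 1)))) = fun s => bb j s + z' • w j s := by
      intro z'
      funext s
      cases s with
      | inl i =>
        simp only [Sum.elim_inl, LinearMap.add_apply, LinearMap.smul_apply, hw, hbbl]
      | inr i =>
        simp only [Sum.elim_inr, hw, hbbr, smul_zero, add_zero]
    have e1 := congrArg Φ (hlam z hz j hj)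
    have e0 := congrArg Φ (hlam 0 hε0 j hj)
    rw [map_smul, hΦ, helim z, smul_eq_mul] at e1
    rw [map_smul, hΦ, helim 0, smul_eq_mul] at e0
    have hδz : (bb j).det (fun s => bb j s + z • w j s) = δf j z := by rw [hδf]
    have hδzz : (bb j).det (fun s => bb j s + (0 : ℂ) • w j s) = δf j 0 := by rw [hδf]
    rw [hδz] at e1
    rw [hδzz, hδ0 j, mul_one] at e0
    rw [← e1, ← e0]
  have hkey0 : ∀ z : ℂ, ‖z‖ < ε → lam z 0 = lam 0 0 := by
    intro z hz
    obtain ⟨Φ, hΦ⟩ := stmt16_aux_single b0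
    have hfam : (fun i => ((v 0 i : C 0))) = ⇑b0 := by
      funext i; rw [hb0]
    have e1 := congrArg Φ (hlam0 z hz)
    have e0 := congrArg Φ (hlam0 0 hε0)
    rw [map_smul, hΦ, hfam, Module.Basis.det_self, smul_eq_mul, mul_one] at e1
    rw [map_smul, hΦ, hfam, Module.Basis.det_self, smul_eq_mul, mul_one] at e0
    rw [← e1, ← e0]
  have hlam0ne : ∀ j, j ≤ n → lam 0 j ≠ 0 := by
    intro j hj hzero
    cases j with
    | zero =>
      have := hlam0 0 hε0
      rw [hzero, zero_smul] at this
      exact hc0 0 (Nat.zero_le n) this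
    | succ j' =>
      have := hlam 0 hε0 j' hj
      rw [hzero, zero_smul] at this
      exact hc0 (j' + 1) hj this
  -- the comparison function and its derivative
  obtain ⟨gf, hg0, hgs⟩ : ∃ gf : ℕ → ℂ → ℂ, (∀ z, gf 0 z = lam 0 0) ∧
      (∀ j z, gf (j + 1) z
        = lam 0 (j + 1) ^ ((-1 : ℤ) ^ (j + 1)) * δf j z ^ (-((-1 : ℤ) ^ (j + 1)))) :=
    ⟨fun j => Nat.casesOn j (fun _ => lam 0 0)
      (fun j' z => lam 0 (j' + 1) ^ ((-1 : ℤ) ^ (j' + 1)) * δf j' z ^ (-((-1 : ℤ) ^ (j' + 1)))),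
      fun _ => rfl, fun _ _ => rfl⟩
  obtain ⟨df, hdf0, hdfs⟩ : ∃ df : ℕ → ℂ, df 0 = 0 ∧ ∀ j, df (j + 1)
      = lam 0 (j + 1) ^ ((-1 : ℤ) ^ (j + 1)) * (((-((-1 : ℤ) ^ (j + 1)) : ℤ) : ℂ) * Tf j) :=
    ⟨fun j => Nat.casesOn j 0
      (fun j' => lam 0 (j' + 1) ^ ((-1 : ℤ) ^ (j' + 1))
        * (((-((-1 : ℤ) ^ (j' + 1)) : ℤ) : ℂ) * Tf j')), rfl, fun _ => rfl⟩
  have hgder : ∀ j ∈ Finset.range (n + 1), HasDerivAt (gf j) (df j) 0 := by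
    intro j _
    cases j with
    | zero =>
      have : gf 0 = fun _ : ℂ => lam 0 0 := by funext z; exact hg0 z
      rw [this, hdf0]
      exact hasDerivAt_const 0 _
    | succ j' =>
      have hzp : HasDerivAt (fun t : ℂ => t ^ (-((-1 : ℤ) ^ (j' + 1)))) 
          ((((-((-1 : ℤ) ^ (j' + 1)) : ℤ) : ℂ))
            * (δf j' 0) ^ ((-((-1 : ℤ) ^ (j' + 1))) - 1)) (δf j' 0) :=
        hasDerivAt_zpow _ _ (Or.inl (by rw [hδ0]; exact one_ne_zero))
      have hcomp := HasDerivAt.comp 0 hzp (hδder j')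
      have h2 : HasDerivAt (fun z : ℂ => δf j' z ^ (-((-1 : ℤ) ^ (j' + 1))))
          ((((-((-1 : ℤ) ^ (j' + 1)) : ℤ) : ℂ)) * Tf j') 0 := by
        have := hcomp
        simp only [Function.comp_def, hδ0 j', one_zpow, mul_one] at this
        exact this
      have h3 := h2.const_mul (lam 0 (j' + 1) ^ ((-1 : ℤ) ^ (j' + 1)))
      have hfun : gf (j' + 1) = fun z : ℂ =>
          lam 0 (j' + 1) ^ ((-1 : ℤ) ^ (j' + 1)) * δf j' z ^ (-((-1 : ℤ) ^ (j' + 1))) := by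
        funext z; exact hgs j' z
      rw [hfun, hdfs j']
      convert h3 using 1 <;> ring
  have hG := HasDerivAt.finset_prod hgder
  have hEq : (fun z : ℂ => ∏ j ∈ Finset.range (n + 1), (lam z j) ^ ((-1 : ℤ) ^ j))
      =ᶠ[nhds (0 : ℂ)] (fun z => ∏ j ∈ Finset.range (n + 1), gf j z) := by
    filter_upwards [Metric.ball_mem_nhds (0 : ℂ) hε] with z hz
    have hz' : ‖z‖ < ε := by simpa [Metric.mem_ball, dist_zero_right] using hz
    refine Finset.prod_congr rfl ?_
    intro j hjm
    cases j with
    | zero =>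
      rw [hg0, pow_zero, zpow_one, hkey0 z hz']
    | succ j' =>
      have hj : j' + 1 ≤ n := by
        have := Finset.mem_range.1 hjm; omega
      rw [hgs]
      exact stmt16_aux_zpow _ _ _ _ (hkey z hz' j' hj) (hlam0ne (j' + 1) hj)
  have hfinal := hG.congr_of_eventuallyEq (hEq.trans
    (Filter.EventuallyEq.of_eq (funext fun z => (Finset.prod_apply z _ _).symm)))
  convert hfinal using 1
  · rfl
  · rfl
  -- identify the derivative values
  have hgf0 : ∀ i, gf i 0 = lam 0 i ^ ((-1 : ℤ) ^ i) := by
    intro i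
    cases i with
    | zero => rw [hg0, pow_zero, zpow_one]
    | succ i' => rw [hgs, hδ0, one_zpow, mul_one]
  rw [traceid]
  rw [Finset.sum_range_succ']
  rw [hdf0, smul_zero, add_zero]
  have hterm : ∀ j ∈ Finset.range n,
      (∏ i ∈ (Finset.range (n + 1)).erase (j + 1), gf i 0) • df (j + 1)
      = (∏ i ∈ Finset.range (n + 1), lam 0 i ^ ((-1 : ℤ) ^ i))
          * ((((-((-1 : ℤ) ^ (j + 1)) : ℤ) : ℂ)) * Tf j) := by
    intro j hjm
    have hjmem : j + 1 ∈ Finset.range (n + 1) := by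
      rw [Finset.mem_range] at hjm ⊢; omega
    rw [hdfs j, smul_eq_mul, ← mul_assoc]
    rw [Finset.prod_congr rfl (fun i _ => hgf0 i)]
    rw [Finset.prod_erase_mul _ _ hjmem]
  rw [Finset.sum_congr rfl hterm]
  rw [neg_mul, Finset.sum_mul, ← Finset.sum_neg_distrib]
  refine Finset.sum_congr rfl ?_
  intro j hjm
  push_cast
  ring
end

section
/- Let V be a real vector space of odd dimension n = 2r+1, X ∈ V, θ ∈ V* with θ(X) = 1, and let ω ∈ Λ²V* satisfy ι_X ω = 0 and assume ω restricts to a symplectic form on W = ker θ (so that wedging by ω^{r−k} is an isomorphism Λ^k W* → Λ^{2r−k} W*, identifying Λ^j W* with Λ^j V* ∩ ker ι_X). Define Γ : Λ^k V* → Λ^{n−k}V* for 0 ≤ k ≤ r by Γ(f∧θ + g) = (g∧ω^{r−k})∧θ + f∧ω^{r−k+1} for f ∈ Λ^{k−1}V* ∩ ker ι_X and g ∈ Λ^k V* ∩ ker ι_X, and for r+1 ≤ k ≤ n by Γ(f∧θ + g) = ((L^{k−r})^{−1}g)∧θ + (L^{k−1−r})^{−1}f, where L denotes wedging by ω on ker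 ι_X. Then Γ² = id on Λ^• V*. -/
set_option maxHeartbeats 1000000
set_option synthInstance.maxHeartbeats 1000000

/-- Interior multiplication `ι_X` on forms (elements of the exterior algebra of
`V* = Module.Dual ℝ V`): left contraction by the evaluation functional of
`X ∈ V`. -/
noncomputable def interiorProd {V : Type*} [AddCommGroup V] [Module ℝ V]
    (X : V) :
    ExteriorAlgebra ℝ (Module.Dual ℝ V) →ₗ[ℝ] ExteriorAlgebra ℝ (Module.Dual ℝ V) :=
  CliffordAlgebra.contractLeft (Module.Dual.eval ℝ V X)

/-!
Write a `k`-form as `f ∧ θ + g` with `ι_X f = ι_X g = 0`. For `k ≤ r`, `Γ` turns it into an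
`(n - k)`-form already presented in the Lefschetz form `f₀ ∧ ω^j ∧ θ + g₀ ∧ ω^(j+1)` on which `Γ`
acts in degree `n - k`, and that action undoes the first one. For `r < k < n` Lefschetz surjectivity provides such a presentation of the form itself and
the same computation runs the other way. In degree `n` the part `g` vanishes, because `θ ∧ g` has
degree `n + 1` while `ι_X (θ ∧ g) = g`. Since `Λ^• V*` is the sum of its graded pieces, `Γ² = id`.
-/

namespace ExteriorAlgebra

variable {R M : Type*} [CommRing R] [AddCommGroup M] [Module R M]

lemma ι_mul_mem_exteriorPower (m : M) {n : ℕ} {x : ExteriorAlgebra R M}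
    (hx : x ∈ ⋀[R]^n M) : ι R m * x ∈ ⋀[R]^(n + 1) M := by
  rw [exteriorPower, pow_succ']
  exact Submodule.mul_mem_mul (LinearMap.mem_range_self _ m) hx

lemma ι_mul_eq_neg_one_pow_smul_mul_ι (m : M) {n : ℕ} {x : ExteriorAlgebra R M}
    (hx : x ∈ ⋀[R]^n M) : ι R m * x = (-1 : R) ^ n • (x * ι R m) := by
  induction hx using Submodule.pow_induction_on_left' with
  | algebraMap c => rw [pow_zero, one_smul, Algebra.commutes]
  | add x y i _ _ ihx ihy => rw [mul_add, add_mul, smul_add, ihx, ihy]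
  | mem_mul _ hm i x _ ih =>
    obtain ⟨m', rfl⟩ := hm
    have swap : ι R m * ι R m' = -(ι R m' * ι R m) :=
      eq_neg_of_add_eq_zero_left (ι_add_mul_swap m m')
    calc ι R m * (ι R m' * x)
        = -(ι R m' * (ι R m * x)) := by rw [← mul_assoc, swap, neg_mul, mul_assoc]
      _ = (-1 : R) ^ (i + 1) • (ι R m' * x * ι R m) := by
          rw [ih, mul_smul_comm, pow_succ, mul_smul, neg_one_smul, mul_assoc, smul_neg]

lemma linearMap_ext_exteriorPower {N : Type*} [AddCommGroup N] [Module R N]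
    {f g : ExteriorAlgebra R M →ₗ[R] N} (h : ∀ n, ∀ x ∈ ⋀[R]^n M, f x = g x) : f = g := by
  refine LinearMap.ext fun x => ?_
  have hx : x ∈ ⨆ n : ℕ, ⋀[R]^n M := by
    rw [(DirectSum.Decomposition.isInternal (fun n : ℕ => ⋀[R]^n M)).submodule_iSup_eq_top]
    trivial
  refine Submodule.iSup_induction _ (motive := fun x => f x = g x) hx h (by simp) ?_
  intro x y hx hy
  rw [map_add, map_add, hx, hy]

lemma exteriorPower_eq_bot_of_finrank_lt {K : Type*} [Field K] [Module K M]
    [FiniteDimensional K M] {n : ℕ} (hn : Module.finrank K M < n) : ⋀[K]^n M = ⊥ := by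
  rw [← ιMulti_span_fixedDegree, Submodule.span_eq_bot]
  rintro _ ⟨v, rfl⟩
  refine AlternatingMap.map_linearDependent _ v fun h => ?_
  have := h.fintype_card_le_finrank
  rw [Fintype.card_fin] at this
  omega

end ExteriorAlgebra

open ExteriorAlgebra

section InteriorProduct

variable {V : Type*} [AddCommGroup V] [Module ℝ V]

local notation "Λ" => ExteriorAlgebra ℝ (Module.Dual ℝ V)

lemma interiorProd_ι_mul (X : V) (φ : Module.Dual ℝ V) (x : Λ) :
    interiorProd X (ι ℝ φ * x) = φ X • x - ι ℝ φ * interiorProd X x := by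
  simpa [interiorProd] using CliffordAlgebra.contractLeft_ι_mul (d := Module.Dual.eval ℝ V X) φ x

lemma interiorProd_interiorProd (X : V) (x : Λ) : interiorProd X (interiorProd X x) = 0 :=
  CliffordAlgebra.contractLeft_contractLeft _ x

lemma interiorProd_algebraMap (X : V) (c : ℝ) : interiorProd X (algebraMap ℝ Λ c) = 0 :=
  CliffordAlgebra.contractLeft_algebraMap _ _ c

lemma interiorProd_eq_zero_of_mem_exteriorPower_zero (X : V) {x : Λ}
    (hx : x ∈ ⋀[ℝ]^0 (Module.Dual ℝ V)) : interiorProd X x = 0 := by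
  rw [exteriorPower, pow_zero] at hx
  obtain ⟨c, rfl⟩ := Submodule.mem_one.mp hx
  exact interiorProd_algebraMap X c

lemma interiorProd_mem_exteriorPower (X : V) {n : ℕ} {x : Λ}
    (hx : x ∈ ⋀[ℝ]^n (Module.Dual ℝ V)) :
    interiorProd X x ∈ ⋀[ℝ]^(n - 1) (Module.Dual ℝ V) := by
  induction hx using Submodule.pow_induction_on_left' with
  | algebraMap c =>
    rw [interiorProd_algebraMap]
    exact zero_mem _
  | add x y i _ _ ihx ihy => rw [map_add]; exact add_mem ihx ihy
  | mem_mul _ hm i x hx ih =>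
    obtain ⟨φ, rfl⟩ := hm
    rw [interiorProd_ι_mul, Nat.succ_sub_one]
    refine sub_mem (Submodule.smul_mem _ _ hx) ?_
    cases i with
    | zero => simp [interiorProd_eq_zero_of_mem_exteriorPower_zero X hx]
    | succ j => exact ι_mul_mem_exteriorPower φ ih

lemma exists_eq_mul_ι_add (X : V) (θ : Module.Dual ℝ V) (hθX : θ X = 1)
    {k : ℕ} {u : Λ} (hu : u ∈ ⋀[ℝ]^(k + 1) (Module.Dual ℝ V)) :
    ∃ f g : Λ, f ∈ ⋀[ℝ]^k (Module.Dual ℝ V) ∧ interiorProd X f = 0 ∧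
      g ∈ ⋀[ℝ]^(k + 1) (Module.Dual ℝ V) ∧ interiorProd X g = 0 ∧
      u = f * ι ℝ θ + g := by
  have hf : interiorProd X u ∈ ⋀[ℝ]^k (Module.Dual ℝ V) := interiorProd_mem_exteriorPower X hu
  have hθf := ι_mul_mem_exteriorPower θ hf
  refine ⟨(-1 : ℝ) ^ k • interiorProd X u, u - ι ℝ θ * interiorProd X u,
    Submodule.smul_mem _ _ hf, ?_, sub_mem hu hθf, ?_, ?_⟩
  · rw [map_smul, interiorProd_interiorProd, smul_zero]
  · rw [map_sub, interiorProd_ι_mul, hθX, one_smul, interiorProd_interiorProd, mul_zero,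
      sub_zero, sub_self]
  · rw [smul_mul_assoc, ← ι_mul_eq_neg_one_pow_smul_mul_ι θ hf]
    abel

lemma eq_zero_of_interiorProd_eq_zero_of_finrank_le [FiniteDimensional ℝ V] (X : V)
    (θ : Module.Dual ℝ V) (hθX : θ X = 1) {n : ℕ} (hn : Module.finrank ℝ V ≤ n) {g : Λ}
    (hg : g ∈ ⋀[ℝ]^n (Module.Dual ℝ V)) (hgX : interiorProd X g = 0) : g = 0 := by
  have hθg : ι ℝ θ * g = 0 := by
    have h := ι_mul_mem_exteriorPower θ hg
    rwa [exteriorPower_eq_bot_of_finrank_lt (by rw [Subspace.dual_finrank_eq]; omega),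
      Submodule.mem_bot] at h
  simpa [hθg, hθX, hgX, eq_comm] using interiorProd_ι_mul X θ g

end InteriorProduct

section Chirality

variable {V : Type*} [AddCommGroup V] [Module ℝ V]

local notation "Λ" => ExteriorAlgebra ℝ (Module.Dual ℝ V)

def LefschetzSurjective (r : ℕ) (X : V) (ω : Λ) : Prop :=
  ∀ k ≤ r, ∀ y ∈ ⋀[ℝ]^(2 * r - k) (Module.Dual ℝ V), interiorProd X y = 0 →
    ∃ u ∈ ⋀[ℝ]^k (Module.Dual ℝ V), interiorProd X u = 0 ∧ u * ω ^ (r - k) = y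

/-- In degrees above `r` the operator is described through the Lefschetz representations
`f = f₀ ∧ ω^(k-1-r)`, `g = g₀ ∧ ω^(k-r)` instead of through `(L^j)⁻¹`. -/
structure IsChiralityOperator (r : ℕ) (X : V) (θ : Module.Dual ℝ V) (ω : Λ) (Γ : Λ →ₗ[ℝ] Λ) :
    Prop where
  apply_of_mem_zero : ∀ g ∈ ⋀[ℝ]^0 (Module.Dual ℝ V), Γ g = (g * ω ^ r) * ι ℝ θ
  apply_mul_ι_add : ∀ k : ℕ, k + 1 ≤ r → ∀ f g : Λ,
    f ∈ ⋀[ℝ]^k (Module.Dual ℝ V) → interiorProd X f = 0 →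
    g ∈ ⋀[ℝ]^(k + 1) (Module.Dual ℝ V) → interiorProd X g = 0 →
    Γ (f * ι ℝ θ + g) = (g * ω ^ (r - (k + 1))) * ι ℝ θ + f * ω ^ (r - k)
  apply_mul_pow_mul_ι_add_mul_pow : ∀ k : ℕ, r + 1 ≤ k → k ≤ 2 * r → ∀ f₀ g₀ : Λ,
    f₀ ∈ ⋀[ℝ]^(2 * r - k + 1) (Module.Dual ℝ V) → interiorProd X f₀ = 0 →
    g₀ ∈ ⋀[ℝ]^(2 * r - k) (Module.Dual ℝ V) → interiorProd X g₀ = 0 →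
    Γ ((f₀ * ω ^ (k - 1 - r)) * ι ℝ θ + g₀ * ω ^ (k - r)) = g₀ * ι ℝ θ + f₀
  apply_mul_pow_mul_ι : ∀ f₀ ∈ ⋀[ℝ]^0 (Module.Dual ℝ V), Γ ((f₀ * ω ^ r) * ι ℝ θ) = f₀

namespace IsChiralityOperator

variable {r : ℕ} {X : V} {θ : Module.Dual ℝ V} {ω : ExteriorAlgebra ℝ (Module.Dual ℝ V)}
  {Γ : ExteriorAlgebra ℝ (Module.Dual ℝ V) →ₗ[ℝ] ExteriorAlgebra ℝ (Module.Dual ℝ V)}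

lemma apply_apply_mul_ι_add_of_lt (hΓ : IsChiralityOperator r X θ ω Γ) {m : ℕ}
    (hm : m < r) {f g : Λ} (hf : f ∈ ⋀[ℝ]^m (Module.Dual ℝ V)) (hfX : interiorProd X f = 0)
    (hg : g ∈ ⋀[ℝ]^(m + 1) (Module.Dual ℝ V)) (hgX : interiorProd X g = 0) :
    Γ (Γ (f * ι ℝ θ + g)) = f * ι ℝ θ + g := by
  have h := hΓ.apply_mul_pow_mul_ι_add_mul_pow (2 * r - m) (by omega) (by omega) g f
    (by convert hg using 2; omega) hgX (by convert hf using 2; omega) hfX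
  rw [show 2 * r - m - 1 - r = r - (m + 1) by omega, show 2 * r - m - r = r - m by omega] at h
  rw [hΓ.apply_mul_ι_add m hm f g hf hfX hg hgX, h]

lemma apply_apply_mul_ι_add_of_le (hΓ : IsChiralityOperator r X θ ω Γ)
    (hL : LefschetzSurjective r X ω) {m : ℕ} (hrm : r ≤ m) (hm : m < 2 * r) {f g : Λ}
    (hf : f ∈ ⋀[ℝ]^m (Module.Dual ℝ V)) (hfX : interiorProd X f = 0)
    (hg : g ∈ ⋀[ℝ]^(m + 1) (Module.Dual ℝ V)) (hgX : interiorProd X g = 0) :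
    Γ (Γ (f * ι ℝ θ + g)) = f * ι ℝ θ + g := by
  obtain ⟨f₀, hf₀, hf₀X, rfl⟩ := hL (2 * r - m) (by omega) f (by convert hf using 2; omega) hfX
  obtain ⟨g₀, hg₀, hg₀X, rfl⟩ :=
    hL (2 * r - (m + 1)) (by omega) g (by convert hg using 2; omega) hgX
  have hf₀' : f₀ ∈ ⋀[ℝ]^(2 * r - (m + 1) + 1) (Module.Dual ℝ V) := by
    convert hf₀ using 2; omega
  have h₁ := hΓ.apply_mul_pow_mul_ι_add_mul_pow (m + 1) (by omega) hm f₀ g₀ hf₀' hf₀X hg₀ hg₀X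
  have h₂ := hΓ.apply_mul_ι_add (2 * r - (m + 1)) (by omega) g₀ f₀ hg₀ hg₀X hf₀' hf₀X
  rw [show m + 1 - 1 - r = r - (2 * r - m) by omega,
    show m + 1 - r = r - (2 * r - (m + 1)) by omega] at h₁
  rw [show r - (2 * r - (m + 1) + 1) = r - (2 * r - m) by omega] at h₂
  rw [h₁, h₂]

lemma apply_apply_mul_ι_of_mem_two_mul (hΓ : IsChiralityOperator r X θ ω Γ)
    (hL : LefschetzSurjective r X ω) {f : Λ} (hf : f ∈ ⋀[ℝ]^(2 * r) (Module.Dual ℝ V))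
    (hfX : interiorProd X f = 0) : Γ (Γ (f * ι ℝ θ)) = f * ι ℝ θ := by
  obtain ⟨f₀, hf₀, -, rfl⟩ := hL 0 (Nat.zero_le r) f hf hfX
  rw [Nat.sub_zero, hΓ.apply_mul_pow_mul_ι f₀ hf₀, hΓ.apply_of_mem_zero f₀ hf₀]

lemma apply_apply_of_mem [FiniteDimensional ℝ V] (hΓ : IsChiralityOperator r X θ ω Γ)
    (hL : LefschetzSurjective r X ω) (hdim : Module.finrank ℝ V = 2 * r + 1) (hθX : θ X = 1)
    {k : ℕ} {u : Λ} (hu : u ∈ ⋀[ℝ]^k (Module.Dual ℝ V)) : Γ (Γ u) = u := by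
  obtain _ | m := k
  · rw [hΓ.apply_of_mem_zero u hu, hΓ.apply_mul_pow_mul_ι u hu]
  obtain ⟨f, g, hf, hfX, hg, hgX, rfl⟩ := exists_eq_mul_ι_add X θ hθX hu
  rcases lt_or_ge m r with hmr | hrm
  · exact hΓ.apply_apply_mul_ι_add_of_lt hmr hf hfX hg hgX
  rcases lt_or_ge m (2 * r) with hm | hm
  · exact hΓ.apply_apply_mul_ι_add_of_le hL hrm hm hf hfX hg hgX
  have hg0 : g = 0 :=
    eq_zero_of_interiorProd_eq_zero_of_finrank_le X θ hθX (by omega) hg hgX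
  rcases hm.eq_or_lt with rfl | hm
  · rw [hg0, add_zero, hΓ.apply_apply_mul_ι_of_mem_two_mul hL hf hfX]
  · have hf0 : f = 0 :=
      eq_zero_of_interiorProd_eq_zero_of_finrank_le X θ hθX (by omega) hf hfX
    simp [hf0, hg0]

end IsChiralityOperator

end Chirality

theorem stmt17_general (V : Type*) [AddCommGroup V] [Module ℝ V] [FiniteDimensional ℝ V]
    (r : ℕ) (hdim : Module.finrank ℝ V = 2 * r + 1)
    (X : V) (θ : Module.Dual ℝ V) (hθX : θ X = 1)
    (ω : ExteriorAlgebra ℝ (Module.Dual ℝ V))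
    (hL : ∀ k : ℕ, k ≤ r →
      (∀ u ∈ ⋀[ℝ]^k (Module.Dual ℝ V), interiorProd X u = 0 →
        u * ω ^ (r - k) = 0 → u = 0) ∧
      (∀ y ∈ ⋀[ℝ]^(2 * r - k) (Module.Dual ℝ V), interiorProd X y = 0 →
        ∃ u ∈ ⋀[ℝ]^k (Module.Dual ℝ V),
          interiorProd X u = 0 ∧ u * ω ^ (r - k) = y))
    (Γ : ExteriorAlgebra ℝ (Module.Dual ℝ V) →ₗ[ℝ]
      ExteriorAlgebra ℝ (Module.Dual ℝ V))
    (hΓ0 : ∀ g ∈ ⋀[ℝ]^0 (Module.Dual ℝ V),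
      Γ g = (g * ω ^ r) * ExteriorAlgebra.ι ℝ θ)
    (hΓ1 : ∀ k : ℕ, k + 1 ≤ r →
      ∀ f g : ExteriorAlgebra ℝ (Module.Dual ℝ V),
        f ∈ ⋀[ℝ]^k (Module.Dual ℝ V) → interiorProd X f = 0 →
        g ∈ ⋀[ℝ]^(k + 1) (Module.Dual ℝ V) → interiorProd X g = 0 →
        Γ (f * ExteriorAlgebra.ι ℝ θ + g) =
          (g * ω ^ (r - (k + 1))) * ExteriorAlgebra.ι ℝ θ + f * ω ^ (r - k))
    (hΓ2 : ∀ k : ℕ, r + 1 ≤ k → k ≤ 2 * r →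
      ∀ f₀ g₀ : ExteriorAlgebra ℝ (Module.Dual ℝ V),
        f₀ ∈ ⋀[ℝ]^(2 * r - k + 1) (Module.Dual ℝ V) → interiorProd X f₀ = 0 →
        g₀ ∈ ⋀[ℝ]^(2 * r - k) (Module.Dual ℝ V) → interiorProd X g₀ = 0 →
        Γ ((f₀ * ω ^ (k - 1 - r)) * ExteriorAlgebra.ι ℝ θ + g₀ * ω ^ (k - r)) =
          g₀ * ExteriorAlgebra.ι ℝ θ + f₀)
    (hΓ3 : ∀ f₀ ∈ ⋀[ℝ]^0 (Module.Dual ℝ V),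
      Γ ((f₀ * ω ^ r) * ExteriorAlgebra.ι ℝ θ) = f₀) :
    Γ ∘ₗ Γ = LinearMap.id := by
  have hΓ : IsChiralityOperator r X θ ω Γ := ⟨hΓ0, hΓ1, hΓ2, hΓ3⟩
  have hsurj : LefschetzSurjective r X ω := fun k hk => (hL k hk).2
  exact linearMap_ext_exteriorPower fun _ _ hu => hΓ.apply_apply_of_mem hsurj hdim hθX hu

theorem stmt17 (V : Type*) [AddCommGroup V] [Module ℝ V] [FiniteDimensional ℝ V]
    (r : ℕ) (hdim : Module.finrank ℝ V = 2 * r + 1)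
    (X : V) (θ : Module.Dual ℝ V) (hθX : θ X = 1)
    (ω : ExteriorAlgebra ℝ (Module.Dual ℝ V))
    (hω2 : ω ∈ ⋀[ℝ]^2 (Module.Dual ℝ V))
    (hιω : interiorProd X ω = 0)
    (hL : ∀ k : ℕ, k ≤ r →
      (∀ u ∈ ⋀[ℝ]^k (Module.Dual ℝ V), interiorProd X u = 0 →
        u * ω ^ (r - k) = 0 → u = 0) ∧
      (∀ y ∈ ⋀[ℝ]^(2 * r - k) (Module.Dual ℝ V), interiorProd X y = 0 →
        ∃ u ∈ ⋀[ℝ]^k (Module.Dual ℝ V),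
          interiorProd X u = 0 ∧ u * ω ^ (r - k) = y))
    (Γ : ExteriorAlgebra ℝ (Module.Dual ℝ V) →ₗ[ℝ]
      ExteriorAlgebra ℝ (Module.Dual ℝ V))
    (hΓ0 : ∀ g ∈ ⋀[ℝ]^0 (Module.Dual ℝ V),
      Γ g = (g * ω ^ r) * ExteriorAlgebra.ι ℝ θ)
    (hΓ1 : ∀ k : ℕ, k + 1 ≤ r →
      ∀ f g : ExteriorAlgebra ℝ (Module.Dual ℝ V),
        f ∈ ⋀[ℝ]^k (Module.Dual ℝ V) → interiorProd X f = 0 →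
        g ∈ ⋀[ℝ]^(k + 1) (Module.Dual ℝ V) → interiorProd X g = 0 →
        Γ (f * ExteriorAlgebra.ι ℝ θ + g) =
          (g * ω ^ (r - (k + 1))) * ExteriorAlgebra.ι ℝ θ + f * ω ^ (r - k))
    (hΓ2 : ∀ k : ℕ, r + 1 ≤ k → k ≤ 2 * r →
      ∀ f₀ g₀ : ExteriorAlgebra ℝ (Module.Dual ℝ V),
        f₀ ∈ ⋀[ℝ]^(2 * r - k + 1) (Module.Dual ℝ V) → interiorProd X f₀ = 0 →
        g₀ ∈ ⋀[ℝ]^(2 * r - k) (Module.Dual ℝ V) → interiorProd X g₀ = 0 →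
        Γ ((f₀ * ω ^ (k - 1 - r)) * ExteriorAlgebra.ι ℝ θ + g₀ * ω ^ (k - r)) =
          g₀ * ExteriorAlgebra.ι ℝ θ + f₀)
    (hΓ3 : ∀ f₀ ∈ ⋀[ℝ]^0 (Module.Dual ℝ V),
      Γ ((f₀ * ω ^ r) * ExteriorAlgebra.ι ℝ θ) = f₀) :
    Γ ∘ₗ Γ = LinearMap.id :=
  stmt17_general V r hdim X θ hθX ω hL Γ hΓ0 hΓ1 hΓ2 hΓ3
end
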